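/- arXiv:1401.7598 — 8 statements merged into one kernel-verified Lean document; each statement's English description precedes it below -/
import Mathlib

section
/- If A and B are sets of nonnegative integers each containing 0, then the Shnirel'man density of the sumset satisfies σ(A+B) ≥ σ(A) + σ(B) − σ(A)σ(B). -/
open Pointwise Filter

/-- The counting function of a set of nonnegative integers: the number of
positive elements of `A` that are at most `n`. -/
noncomputable def countingFn (A : Set ℕ) (n : ℕ) : ℕ := (A ∩ Set.Icc 1 n).ncard

/-- The Shnirel'man density `σ(A) = inf_{n ≥ 1} A(n)/n`. -/
noncomputable def shnirelmanDensity (A : Set ℕ) : ℝ :=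
  ⨅ n : {n : ℕ // 0 < n}, (countingFn A (n : ℕ) : ℝ) / ((n : ℕ) : ℝ)

/-- The lower asymptotic density `d_L(A) = liminf_{n → ∞} A(n)/n`. -/
noncomputable def lowerDensity (A : Set ℕ) : ℝ :=
  liminf (fun n : ℕ => (countingFn A n : ℝ) / (n : ℝ)) atTop

/-- `A` is an additive basis of order `h`: every nonnegative integer is the
sum of exactly `h` elements of `A` (with repetitions allowed). -/
def IsBasisOfOrder (A : Set ℕ) (h : ℕ) : Prop :=
  ∀ n : ℕ, ∃ c : Fin h → ℕ, (∀ i, c i ∈ A) ∧ ∑ i, c i = n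

/-- `A` is an asymptotic basis of order `h`: every sufficiently large integer
is the sum of exactly `h` elements of `A` (with repetitions allowed). -/
def IsAsymptoticBasisOfOrder (A : Set ℕ) (h : ℕ) : Prop :=
  ∀ᶠ n : ℕ in atTop, ∃ c : Fin h → ℕ, (∀ i, c i ∈ A) ∧ ∑ i, c i = n

/-- A minimal asymptotic basis of order `h` is an asymptotic basis of order `h`
no proper subset of which is an asymptotic basis of order `h`. -/
def IsMinimalAsymptoticBasisOfOrder (A : Set ℕ) (h : ℕ) : Prop :=
  IsAsymptoticBasisOfOrder A h ∧
    ∀ B : Set ℕ, B ⊂ A → ¬ IsAsymptoticBasisOfOrder B h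

/-- A maximal asymptotic nonbasis of order `h` is a set that is not an
asymptotic basis of order `h`, but such that adjoining any element outside it
produces an asymptotic basis of order `h`. -/
def IsMaximalAsymptoticNonbasisOfOrder (A : Set ℕ) (h : ℕ) : Prop :=
  ¬ IsAsymptoticBasisOfOrder A h ∧
    ∀ b : ℕ, b ∉ A → IsAsymptoticBasisOfOrder (A ∪ {b}) h

lemma countingFn_eq (S : Set ℕ) (m : ℕ) [DecidablePred (· ∈ S)] :
    countingFn S m = ((Finset.Icc 1 m).filter (· ∈ S)).card := by
  rw [countingFn, ← Set.ncard_coe_finset]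
  congr 1
  ext x
  simp only [Set.mem_inter_iff, Set.mem_Icc, Finset.coe_filter, Finset.mem_Icc,
    Set.mem_setOf_eq]
  tauto

open Classical in
lemma shnirelman_key (A B : Set ℕ) (hA : 0 ∈ A) (hB : 0 ∈ B) (n : ℕ)
    (β : ℝ) (hβ0 : 0 ≤ β)
    (hβ : ∀ m : ℕ, 0 < m → β * m ≤ countingFn B m) :
    (countingFn A n : ℝ) + β * ((n : ℝ) - countingFn A n) ≤ countingFn (A + B) n := by
  classical
  set An := (Finset.Icc 1 n).filter (· ∈ A) with hAn
  set D := (Finset.Icc 1 n).filter (· ∉ A) with hD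
  have hcards : An.card + D.card = n := by
    rw [hAn, hD, Finset.card_filter_add_card_filter_not]
    simp
  have hne : ∀ m : ℕ, ((Finset.range (m+1)).filter (· ∈ A)).Nonempty := fun m =>
    ⟨0, by simp [hA]⟩
  set f : ℕ → ℕ := fun m => ((Finset.range (m+1)).filter (· ∈ A)).max' (hne m) with hf
  have hfmem : ∀ m, f m ∈ (Finset.range (m+1)).filter (· ∈ A) := fun m =>
    Finset.max'_mem _ (hne m)
  have hfA : ∀ m, f m ∈ A := by
    intro m
    have := hfmem m
    simp only [Finset.mem_filter] at this
    exact this.2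
  have hfle : ∀ m, f m ≤ m := by
    intro m
    have := hfmem m
    simp only [Finset.mem_filter, Finset.mem_range] at this
    omega
  have hfmax : ∀ m a, a ∈ A → a ≤ m → a ≤ f m := by
    intro m a ha ham
    apply Finset.le_max'
    simp only [Finset.mem_filter, Finset.mem_range]
    exact ⟨by omega, ha⟩
  set C := D.filter (fun m => m - f m ∈ B) with hC
  set T := (Finset.Icc 1 n).filter (· ∈ A + B) with hT
  have hAnT : An ⊆ T := by
    intro m hm
    simp only [hAn, hT, Finset.mem_filter] at hm ⊢
    exact ⟨hm.1, by simpa using Set.add_mem_add hm.2 hB⟩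
  have hCT : C ⊆ T := by
    intro m hm
    simp only [hC, hD, hT, Finset.mem_filter] at hm ⊢
    refine ⟨hm.1.1, ?_⟩
    have heq : f m + (m - f m) = m := by have := hfle m; omega
    rw [← heq]
    exact Set.add_mem_add (hfA m) hm.2
  have hdisj : Disjoint An C := by
    rw [Finset.disjoint_left]
    intro m hm hm'
    simp only [hAn, Finset.mem_filter] at hm
    simp only [hC, hD, Finset.mem_filter] at hm'
    exact hm'.1.2 hm.2
  have hTcard : An.card + C.card ≤ T.card := by
    rw [← Finset.card_union_of_disjoint hdisj]
    exact Finset.card_le_card (Finset.union_subset hAnT hCT)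
  have himg : ∀ m ∈ D, f m ∈ D.image f := fun m hm => Finset.mem_image_of_mem f hm
  have hDsum : D.card = ∑ a ∈ D.image f, (D.filter (fun m => f m = a)).card :=
    Finset.card_eq_sum_card_fiberwise himg
  have hCsum : C.card = ∑ a ∈ D.image f, (C.filter (fun m => f m = a)).card :=
    Finset.card_eq_sum_card_fiberwise (fun m hm => himg m (Finset.filter_subset _ _ hm))
  have hfiber : ∀ a ∈ D.image f, β * ((D.filter (fun m => f m = a)).card : ℝ)
      ≤ ((C.filter (fun m => f m = a)).card : ℝ) := by
    intro a _
    set F := D.filter (fun m => f m = a) with hF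
    set L := F.card with hL
    rcases Nat.eq_zero_or_pos L with h0 | hpos
    · rw [h0]
      simp
    have hFne : F.Nonempty := Finset.card_pos.mp hpos
    obtain ⟨M, hMmem, hMmax⟩ : ∃ M ∈ F, ∀ m ∈ F, m ≤ M :=
      ⟨F.max' hFne, F.max'_mem hFne, fun m hm => Finset.le_max' F m hm⟩
    have hMfacts : (1 ≤ M ∧ M ≤ n) ∧ M ∉ A ∧ f M = a := by
      have := hMmem
      simp only [hF, hD, Finset.mem_filter, Finset.mem_Icc] at this
      tauto
    have haA : a ∈ A := hMfacts.2.2 ▸ hfA M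
    have hIcc : F = Finset.Icc (a+1) M := by
      ext m
      constructor
      · intro hmF
        have hle : m ≤ M := hMmax m hmF
        simp only [hF, hD, Finset.mem_filter, Finset.mem_Icc] at hmF
        obtain ⟨⟨_, hmA⟩, hfm⟩ := hmF
        have : a ≤ m := hfm ▸ hfle m
        have : a ≠ m := fun h => hmA (h ▸ haA)
        simp only [Finset.mem_Icc]
        omega
      · intro hm
        simp only [Finset.mem_Icc] at hm
        obtain ⟨ham, hmM⟩ := hm
        have hmn : m ≤ n := le_trans hmM hMfacts.1.2
        have hmA : m ∉ A := by
          intro hmem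
          have := hfmax M m hmem hmM
          rw [hMfacts.2.2] at this
          omega
        have hfm : f m = a := by
          have h1 : a ≤ f m := hfmax m a haA (by omega)
          have h2 : f m ≤ a := by
            have := hfmax M (f m) (hfA m) (le_trans (hfle m) hmM)
            rw [hMfacts.2.2] at this
            exact this
          omega
        simp only [hF, hD, Finset.mem_filter, Finset.mem_Icc]
        exact ⟨⟨⟨by omega, hmn⟩, hmA⟩, hfm⟩
    have haM : a + 1 ≤ M := by
      have h2 : M ∈ Finset.Icc (a+1) M := by rw [← hIcc]; exact hMmem
      simp only [Finset.mem_Icc] at h2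
      exact h2.1
    have hML : M = a + L := by
      have h3 : L = (Finset.Icc (a+1) M).card := by
        rw [hL]; exact congrArg Finset.card hIcc
      rw [Nat.card_Icc] at h3
      omega
    have hGF : C.filter (fun m => f m = a) = F.filter (fun m => m - a ∈ B) := by
      ext m
      simp only [hC, hF, hD, Finset.mem_filter]
      constructor
      · rintro ⟨⟨hm1, hm2⟩, hm3⟩
        exact ⟨⟨hm1, hm3⟩, hm3 ▸ hm2⟩
      · rintro ⟨⟨hm1, hm3⟩, hm2⟩
        exact ⟨⟨hm1, hm3 ▸ hm2⟩, hm3⟩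
    have hGimg : F.filter (fun m => m - a ∈ B)
        = Finset.image (fun b => a + b) ((Finset.Icc 1 L).filter (· ∈ B)) := by
      rw [hIcc, hML]
      ext m
      simp only [Finset.mem_filter, Finset.mem_Icc, Finset.mem_image]
      constructor
      · rintro ⟨⟨h1, h2⟩, h3⟩
        exact ⟨m - a, ⟨⟨by omega, by omega⟩, h3⟩, by omega⟩
      · rintro ⟨b, ⟨⟨hb1, hb2⟩, hbB⟩, rfl⟩
        refine ⟨⟨by omega, by omega⟩, ?_⟩
        simpa using hbB
    have hGcard : (C.filter (fun m => f m = a)).card = countingFn B L := by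
      rw [hGF, hGimg, Finset.card_image_of_injective _ (add_right_injective a),
        countingFn_eq]
    rw [hGcard]
    exact hβ L hpos
  have hCge : β * (D.card : ℝ) ≤ (C.card : ℝ) := by
    rw [hDsum, hCsum]
    push_cast
    rw [Finset.mul_sum]
    exact Finset.sum_le_sum hfiber
  have hDn : (D.card : ℝ) = (n : ℝ) - An.card := by
    have h : (An.card : ℝ) + D.card = n := by exact_mod_cast hcards
    linarith
  have hcA : countingFn A n = An.card := countingFn_eq A n
  have hcAB : countingFn (A + B) n = T.card := countingFn_eq (A + B) n
  rw [hcA, hcAB]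
  have hT' : (An.card : ℝ) + C.card ≤ T.card := by exact_mod_cast hTcard
  rw [← hDn]
  linarith

theorem shnirelman_inequality (A B : Set ℕ) (hA : 0 ∈ A) (hB : 0 ∈ B) :
    shnirelmanDensity (A + B) ≥
      shnirelmanDensity A + shnirelmanDensity B -
        shnirelmanDensity A * shnirelmanDensity B := by
  have hbdd : ∀ S : Set ℕ,
      BddBelow (Set.range fun n : {n : ℕ // 0 < n} => (countingFn S (n : ℕ) : ℝ) / ((n : ℕ) : ℝ)) := by
    intro S
    refine ⟨0, ?_⟩
    rintro x ⟨i, rfl⟩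
    positivity
  have hle : ∀ (S : Set ℕ) (m : ℕ), 0 < m → shnirelmanDensity S ≤ countingFn S m / m :=
    fun S m hm => ciInf_le (hbdd S) ⟨m, hm⟩
  have hnonneg : ∀ S : Set ℕ, 0 ≤ shnirelmanDensity S := by
    intro S
    apply le_ciInf
    intro i
    positivity
  set α := shnirelmanDensity A with hα
  set β := shnirelmanDensity B with hβ
  have hβ1 : β ≤ 1 := by
    have h := hle B 1 one_pos
    have h1 : countingFn B 1 ≤ 1 := by
      rw [countingFn]
      calc (B ∩ Set.Icc 1 1).ncard ≤ (Set.Icc 1 1).ncard :=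
            Set.ncard_le_ncard Set.inter_subset_right (Set.finite_Icc 1 1)
        _ = 1 := by rw [Set.Icc_self, Set.ncard_singleton]
      
    have h1' : (countingFn B 1 : ℝ) ≤ 1 := by exact_mod_cast h1
    simp only [Nat.cast_one, div_one] at h
    linarith
  have hβmul : ∀ m : ℕ, 0 < m → β * m ≤ countingFn B m := by
    intro m hm
    have h := hle B m hm
    rw [le_div_iff₀ (by positivity : (0:ℝ) < (m:ℝ))] at h
    exact h
  have hαmul : ∀ m : ℕ, 0 < m → α * m ≤ countingFn A m := by
    intro m hm
    have h := hle A m hm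
    rw [le_div_iff₀ (by positivity : (0:ℝ) < (m:ℝ))] at h
    exact h
  rw [ge_iff_le, shnirelmanDensity]
  apply le_ciInf
  rintro ⟨m, hm⟩
  have hkey := shnirelman_key A B hA hB m β (hnonneg B) hβmul
  have hαm := hαmul m hm
  rw [le_div_iff₀ (by positivity : (0:ℝ) < (m:ℝ))]
  have hmono : α * m * (1 - β) ≤ (countingFn A m : ℝ) * (1 - β) :=
    mul_le_mul_of_nonneg_right hαm (by linarith)
  nlinarith [hkey, hmono]
end

section
/- If A is a set of nonnegative integers with 0 ∈ A and σ(A) > 0, then there exists a positive integer h such that A is an additive basis of order h, i.e., every nonnegative integer is the sum of exactly h elements of A (repetitions allowed). -/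
open Pointwise Filter

open Finset in
open Classical in
noncomputable def cntF (A : Set ℕ) (n : ℕ) : Finset ℕ :=
  (Finset.Icc 1 n).filter (· ∈ A)

lemma countingFn_eq_s1 (A : Set ℕ) (n : ℕ) : countingFn A n = (cntF A n).card := by
  classical
  rw [countingFn, ← Set.ncard_coe_finset]
  congr 1
  ext x
  simp [cntF, Set.mem_Icc]
  tauto

lemma mem_cntF {A : Set ℕ} {n x : ℕ} : x ∈ cntF A n ↔ (1 ≤ x ∧ x ≤ n) ∧ x ∈ A := by
  classical
  simp [cntF]

lemma cntF_le (A : Set ℕ) (n : ℕ) : (cntF A n).card ≤ n := by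
  classical
  calc (cntF A n).card ≤ (Finset.Icc 1 n).card := Finset.card_le_card (Finset.filter_subset _ _)
  _ = n := by simp

lemma count_add_ge (A B : Set ℕ) (hA0 : 0 ∈ A) (hB0 : 0 ∈ B) (β : ℝ) (hβ0 : 0 ≤ β)
    (hB : ∀ m : ℕ, β * m ≤ (countingFn B m : ℝ)) (n : ℕ) :
    (countingFn A n : ℝ) + β * ((n : ℝ) - countingFn A n) ≤ (countingFn (A + B) n : ℝ) := by
  classical
  set S := cntF A n with hS
  have hSsub : ∀ x ∈ S, 1 ≤ x ∧ x ≤ n ∧ x ∈ A := by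
    intro x hx; rcases mem_cntF.1 hx with ⟨⟨h1,h2⟩,h3⟩; exact ⟨h1,h2,h3⟩
  have h0S : (0:ℕ) ∉ S := fun h => by simpa using (hSsub 0 h).1
  set T := insert 0 S with hT
  have hTmem : ∀ a ∈ T, a ≤ n ∧ a ∈ A := by
    intro a ha
    rcases Finset.mem_insert.1 ha with rfl | ha
    · exact ⟨Nat.zero_le n, hA0⟩
    · exact ⟨(hSsub a ha).2.1, (hSsub a ha).2.2⟩
  set nxt : ℕ → ℕ := fun a =>
    if h : (T.filter (fun x => a < x)).Nonempty then (T.filter (fun x => a < x)).min' h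
    else n+1 with hnxt
  have hlt : ∀ a ∈ T, a < nxt a := by
    intro a ha
    by_cases h : (T.filter (fun x => a < x)).Nonempty
    · have := Finset.min'_mem _ h
      rw [Finset.mem_filter] at this
      simp only [hnxt, dif_pos h]
      exact this.2
    · simp only [hnxt, dif_neg h]
      exact Nat.lt_succ_of_le (hTmem a ha).1
  have hnext_le : ∀ a, ∀ a' ∈ T, a < a' → nxt a ≤ a' := by
    intro a a' ha' haa'
    have hmem : a' ∈ T.filter (fun x => a < x) := Finset.mem_filter.2 ⟨ha', haa'⟩
    have h : (T.filter (fun x => a < x)).Nonempty := ⟨a', hmem⟩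
    simp only [hnxt, dif_pos h]
    exact Finset.min'_le _ _ hmem
  have hle : ∀ a ∈ T, nxt a ≤ n + 1 := by
    intro a ha
    by_cases h : (T.filter (fun x => a < x)).Nonempty
    · have := Finset.min'_mem _ h
      rw [Finset.mem_filter] at this
      simp only [hnxt, dif_pos h]
      exact Nat.le_succ_of_le (hTmem _ this.1).1
    · simp only [hnxt, dif_neg h]
      exact le_refl _
  have hnotT : ∀ a, ∀ m, a < m → m < nxt a → m ∉ T := by
    intro a m h1 h2 hm
    exact absurd (hnext_le a m hm h1) (Nat.not_le.2 h2)
  set g : ℕ → ℕ := fun a => nxt a - a - 1 with hg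
  set P : ℕ → Finset ℕ := fun a => (cntF B (g a)).image (fun b => a + b) with hP
  have hPmem : ∀ a ∈ T, ∀ x ∈ P a, a < x ∧ x < nxt a ∧ x ∈ A + B := by
    intro a ha x hx
    simp only [hP, Finset.mem_image] at hx
    obtain ⟨b, hb, rfl⟩ := hx
    obtain ⟨⟨hb1, hb2⟩, hbB⟩ := mem_cntF.1 hb
    have halt := hlt a ha
    refine ⟨by omega, by simp only [hg] at hb2; omega, ?_⟩
    exact Set.add_mem_add (hTmem a ha).2 hbB
  -- coverage
  have hcov : S ∪ T.biUnion P ⊆ cntF (A+B) n := by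
    intro x hx
    rcases Finset.mem_union.1 hx with hx | hx
    · obtain ⟨h1, h2, h3⟩ := hSsub x hx
      refine mem_cntF.2 ⟨⟨h1, h2⟩, ?_⟩
      have : x + 0 ∈ A + B := Set.add_mem_add h3 hB0
      simpa using this
    · obtain ⟨a, ha, hx⟩ := Finset.mem_biUnion.1 hx
      obtain ⟨h1, h2, h3⟩ := hPmem a ha x hx
      have := hle a ha
      exact mem_cntF.2 ⟨⟨by omega, by omega⟩, h3⟩
  -- disjointness S vs P a
  have hdisj1 : Disjoint S (T.biUnion P) := by
    rw [Finset.disjoint_right]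
    intro x hx hxS
    obtain ⟨a, ha, hxa⟩ := Finset.mem_biUnion.1 hx
    obtain ⟨h1, h2, _⟩ := hPmem a ha x hxa
    exact hnotT a x h1 h2 (Finset.mem_insert_of_mem hxS)
  -- pairwise disjoint pieces
  have hdisj2 : ∀ a ∈ T, ∀ a' ∈ T, a ≠ a' → Disjoint (P a) (P a') := by
    intro a ha a' ha' hne
    rw [Finset.disjoint_left]
    intro x hx hx'
    obtain ⟨h1, h2, _⟩ := hPmem a ha x hx
    obtain ⟨h1', h2', _⟩ := hPmem a' ha' x hx'
    rcases Nat.lt_or_ge a a' with h | h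
    · have := hnext_le a a' ha' h; omega
    · have h' : a' < a := by omega
      have := hnext_le a' a ha h'; omega
  have hcardP : ∀ a, (P a).card = (cntF B (g a)).card := by
    intro a
    exact Finset.card_image_of_injective _ (add_right_injective a)
  -- card lower bound
  have hcard1 : (countingFn (A+B) n : ℕ) ≥ S.card + ∑ a ∈ T, (cntF B (g a)).card := by
    rw [countingFn_eq_s1]
    calc S.card + ∑ a ∈ T, (cntF B (g a)).card
        = S.card + ∑ a ∈ T, (P a).card := by simp_rw [hcardP]
      _ = S.card + (T.biUnion P).card := by rw [Finset.card_biUnion hdisj2]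
      _ = (S ∪ T.biUnion P).card := (Finset.card_union_of_disjoint hdisj1).symm
      _ ≤ (cntF (A+B) n).card := Finset.card_le_card hcov
  -- gap sum lower bound: n ≤ S.card + ∑ g a
  have hgap : n ≤ S.card + ∑ a ∈ T, g a := by
    have hcov2 : Finset.Icc 1 n ⊆ S ∪ T.biUnion (fun a => Finset.Ioc a (a + g a)) := by
      intro m hm
      rw [Finset.mem_Icc] at hm
      by_cases hmS : m ∈ S
      · exact Finset.mem_union_left _ hmS
      · have hne : (T.filter (fun x => x < m)).Nonempty :=
          ⟨0, Finset.mem_filter.2 ⟨Finset.mem_insert_self _ _, by omega⟩⟩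
        set a := (T.filter (fun x => x < m)).max' hne with ha
        have haT : a ∈ T ∧ a < m := by
          have := Finset.max'_mem _ hne
          rw [Finset.mem_filter] at this
          exact this
        have hmlt : m < nxt a := by
          by_contra hcon
          push_neg at hcon
          -- nxt a ≤ m ; nxt a ∈ T (since filter nonempty as m > a)
          have hne2 : (T.filter (fun x => a < x)).Nonempty := by
            by_contra h2
            simp only [hnxt, dif_neg h2] at hcon
            omega
          have hmm := Finset.min'_mem _ hne2
          rw [Finset.mem_filter] at hmm
          have heq : nxt a = (T.filter (fun x => a < x)).min' hne2 := by
            simp only [hnxt, dif_pos hne2]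
          rcases Nat.lt_or_ge (nxt a) m with h3 | h3
          · have : nxt a ≤ a := by
              have : nxt a ∈ T.filter (fun x => x < m) :=
                Finset.mem_filter.2 ⟨by rw [heq]; exact hmm.1, h3⟩
              exact Finset.le_max' _ _ this
            have := hlt a haT.1; omega
          · have hm_eq : nxt a = m := by omega
            have : m ∈ T := by rw [← hm_eq, heq]; exact hmm.1
            rcases Finset.mem_insert.1 this with rfl | h4
            · omega
            · exact hmS h4
        refine Finset.mem_union_right _ (Finset.mem_biUnion.2 ⟨a, haT.1, ?_⟩)
        rw [Finset.mem_Ioc]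
        have := hlt a haT.1
        constructor
        · exact haT.2
        · simp only [hg]; omega
    calc n = (Finset.Icc 1 n).card := by simp
      _ ≤ (S ∪ T.biUnion (fun a => Finset.Ioc a (a + g a))).card := Finset.card_le_card hcov2
      _ ≤ S.card + (T.biUnion (fun a => Finset.Ioc a (a + g a))).card := Finset.card_union_le _ _
      _ ≤ S.card + ∑ a ∈ T, (Finset.Ioc a (a + g a)).card := by
          gcongr
          exact Finset.card_biUnion_le
      _ = S.card + ∑ a ∈ T, g a := by simp
  -- real arithmetic
  have hk : (countingFn A n : ℝ) = (S.card : ℝ) := by rw [countingFn_eq_s1]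
  have hkn : S.card ≤ n := cntF_le A n
  have hsum : β * ((n : ℝ) - S.card) ≤ ∑ a ∈ T, (countingFn B (g a) : ℝ) := by
    have h1 : ∀ a ∈ T, β * (g a : ℝ) ≤ (countingFn B (g a) : ℝ) := fun a _ => hB (g a)
    calc β * ((n : ℝ) - S.card) ≤ β * (∑ a ∈ T, (g a : ℝ)) := by
          apply mul_le_mul_of_nonneg_left _ hβ0
          rw [← Nat.cast_sum]
          have : (n : ℝ) ≤ (S.card + ∑ a ∈ T, g a : ℕ) := by exact_mod_cast hgap
          push_cast at this ⊢
          linarith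
      _ = ∑ a ∈ T, β * (g a : ℝ) := Finset.mul_sum _ _ _
      _ ≤ ∑ a ∈ T, (countingFn B (g a) : ℝ) := Finset.sum_le_sum h1
  have hcard1' : (S.card : ℝ) + ∑ a ∈ T, (countingFn B (g a) : ℝ) ≤ (countingFn (A+B) n : ℝ) := by
    rw [countingFn_eq_s1] at hcard1
    simp_rw [countingFn_eq_s1]
    exact_mod_cast hcard1
  rw [hk]
  linarith

lemma countingFn_le (A : Set ℕ) (n : ℕ) : countingFn A n ≤ n := by
  rw [countingFn_eq_s1]; exact cntF_le A n

noncomputable def iterC (A : Set ℕ) : ℕ → Set ℕ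
  | 0 => A
  | k+1 => iterC A k + A

lemma zero_mem_iterC (A : Set ℕ) (hA0 : 0 ∈ A) : ∀ k, (0:ℕ) ∈ iterC A k
  | 0 => hA0
  | k+1 => by
    have h : (0:ℕ) + 0 ∈ iterC A k + A := Set.add_mem_add (zero_mem_iterC A hA0 k) hA0
    simpa [iterC] using h

lemma iterC_count (A : Set ℕ) (hA0 : 0 ∈ A) (α : ℝ) (hα0 : 0 ≤ α) (hα1 : α ≤ 1)
    (hA : ∀ m : ℕ, α * m ≤ (countingFn A m : ℝ)) :
    ∀ k, ∀ m : ℕ, (1 - (1-α)^(k+1)) * m ≤ (countingFn (iterC A k) m : ℝ) := by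
  intro k
  induction k with
  | zero =>
    intro m
    have := hA m
    simp only [iterC, zero_add, pow_one]
    linarith
  | succ k ih =>
    intro m
    have h1 := count_add_ge (iterC A k) A (zero_mem_iterC A hA0 k) hA0 α hα0 hA m
    have h2 := ih m
    have hc : (countingFn (iterC A k) m : ℝ) ≤ m := by exact_mod_cast countingFn_le _ m
    have hkey : (1-α) * ((1 - (1-α)^(k+1)) * m) ≤ (1-α) * (countingFn (iterC A k) m : ℝ) :=
      mul_le_mul_of_nonneg_left h2 (by linarith)
    have hpow : (1-α)^(k+1+1) = (1-α)^(k+1) * (1-α) := pow_succ _ _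
    show (1 - (1-α)^(k+1+1)) * m ≤ (countingFn (iterC A k + A) m : ℝ)
    nlinarith [h1, hkey, hpow]

lemma iterC_repr (A : Set ℕ) : ∀ k, ∀ x ∈ iterC A k,
    ∃ c : Fin (k+1) → ℕ, (∀ i, c i ∈ A) ∧ ∑ i, c i = x := by
  intro k
  induction k with
  | zero =>
    intro x hx
    exact ⟨fun _ => x, fun _ => hx, by simp⟩
  | succ k ih =>
    intro x hx
    obtain ⟨a, ha, b, hb, hab⟩ := Set.mem_add.1 hx
    obtain ⟨c, hc, hsum⟩ := ih a ha
    refine ⟨Fin.snoc c b, ?_, ?_⟩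
    · intro i
      refine Fin.lastCases ?_ ?_ i
      · simpa using hb
      · intro j; simpa using hc j
    · rw [Fin.sum_univ_castSucc]
      simp [Fin.snoc_castSucc, Fin.snoc_last, hsum, hab]

lemma pigeon (C : Set ℕ) (hC0 : 0 ∈ C) (h : ∀ m : ℕ, (m:ℝ) ≤ 2 * countingFn C m) :
    ∀ n : ℕ, ∃ x ∈ C, ∃ y ∈ C, x + y = n := by
  intro n
  rcases Nat.eq_zero_or_pos n with rfl | hn
  · exact ⟨0, hC0, 0, hC0, rfl⟩
  classical
  set X := insert 0 (cntF C n) with hX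
  have hXsub : ∀ x ∈ X, x ≤ n ∧ x ∈ C := by
    intro x hx
    rcases Finset.mem_insert.1 hx with rfl | hx
    · exact ⟨Nat.zero_le n, hC0⟩
    · rcases mem_cntF.1 hx with ⟨⟨_, h2⟩, h3⟩; exact ⟨h2, h3⟩
  set Y := X.image (fun x => n - x) with hY
  have hYcard : Y.card = X.card := by
    apply Finset.card_image_of_injOn
    intro x hx y hy hxy
    have h1 := (hXsub x hx).1
    have h2 := (hXsub y hy).1
    simp only at hxy
    omega
  have h0X : (0:ℕ) ∉ cntF C n := by
    intro h'; exact absurd (mem_cntF.1 h').1.1 (by omega)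
  have hXcard : X.card = countingFn C n + 1 := by
    rw [hX, Finset.card_insert_of_notMem h0X, countingFn_eq_s1]
  have hnd : ¬ Disjoint X Y := by
    intro hd
    have hsub : X ∪ Y ⊆ Finset.range (n+1) := by
      intro x hx
      rcases Finset.mem_union.1 hx with hx | hx
      · exact Finset.mem_range.2 (Nat.lt_succ_of_le (hXsub x hx).1)
      · obtain ⟨y, hy, rfl⟩ := Finset.mem_image.1 hx
        exact Finset.mem_range.2 (by omega)
    have hcard : X.card + Y.card ≤ n + 1 := by
      calc X.card + Y.card = (X ∪ Y).card := (Finset.card_union_of_disjoint hd).symm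
        _ ≤ (Finset.range (n+1)).card := Finset.card_le_card hsub
        _ = n + 1 := by simp
    rw [hYcard, hXcard] at hcard
    have h2 := h n
    have h3 : n ≤ 2 * countingFn C n := by exact_mod_cast h2
    omega
  obtain ⟨z, hzX, hzY⟩ := Finset.not_disjoint_iff.1 hnd
  obtain ⟨x, hx, hzx⟩ := Finset.mem_image.1 hzY
  refine ⟨x, (hXsub x hx).2, z, (hXsub z hzX).2, ?_⟩
  have := (hXsub x hx).1
  omega


theorem basis_of_positive_shnirelman_density (A : Set ℕ) (hA : 0 ∈ A)
    (hpos : 0 < shnirelmanDensity A) :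
    ∃ h : ℕ, 0 < h ∧ IsBasisOfOrder A h := by
  classical
  set α := shnirelmanDensity A with hαdef
  have hα0 : 0 ≤ α := le_of_lt hpos
  have hbdd : BddBelow (Set.range fun n : {n : ℕ // 0 < n} =>
      (countingFn A (n:ℕ) : ℝ) / ((n:ℕ) : ℝ)) := by
    refine ⟨0, ?_⟩
    rintro x ⟨n, rfl⟩
    positivity
  have hle : ∀ n : ℕ, 0 < n → α ≤ (countingFn A n : ℝ) / n := by
    intro n hn
    exact ciInf_le hbdd ⟨n, hn⟩
  have hcnt : ∀ m : ℕ, α * m ≤ (countingFn A m : ℝ) := by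
    intro m
    rcases Nat.eq_zero_or_pos m with rfl | hm
    · simp
    · have h1 := hle m hm
      have hm' : (0:ℝ) < m := by exact_mod_cast hm
      rw [le_div_iff₀ hm'] at h1
      linarith
  have hα1 : α ≤ 1 := by
    have h1 := hle 1 one_pos
    have h2 : (countingFn A 1 : ℝ) ≤ 1 := by
      have := countingFn_le A 1
      exact_mod_cast this
    simpa using h1.trans (by simpa using h2)
  set t := 1 - α with ht
  have ht0 : 0 ≤ t := by linarith
  have ht1 : t < 1 := by linarith
  obtain ⟨K, hK⟩ := exists_pow_lt_of_lt_one (by norm_num : (0:ℝ) < 1/2) ht1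
  set C := iterC A K with hC
  have hCcnt : ∀ m : ℕ, (m:ℝ) ≤ 2 * countingFn C m := by
    intro m
    have h1 := iterC_count A hA α hα0 hα1 hcnt K m
    have h2 : t^(K+1) ≤ t^K := pow_le_pow_of_le_one ht0 (le_of_lt ht1) (Nat.le_succ K)
    have hm0 : (0:ℝ) ≤ m := Nat.cast_nonneg m
    rw [← ht] at h1
    nlinarith
  have hC0 : (0:ℕ) ∈ C := zero_mem_iterC A hA K
  refine ⟨(K+1)+(K+1), by omega, ?_⟩
  intro n
  obtain ⟨x, hx, y, hy, hxy⟩ := pigeon C hC0 hCcnt n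
  obtain ⟨c1, hc1, hs1⟩ := iterC_repr A K x hx
  obtain ⟨c2, hc2, hs2⟩ := iterC_repr A K y hy
  refine ⟨Fin.append c1 c2, ?_, ?_⟩
  · intro i
    refine Fin.addCases ?_ ?_ i
    · intro j; simpa [Fin.append_left] using hc1 j
    · intro j
      rw [Fin.append_right]
      exact hc2 j
  · rw [Fin.sum_univ_add]
    simp only [Fin.append_left, Fin.append_right]
    rw [hs1, hs2, hxy]
end

section
/- (Nash–Nathanson) If A is a set of nonnegative integers with 0 ∈ A, lower asymptotic density d_L(A) > 0, and the greatest common divisor of the positive elements of A equal to 1, then A is an asymptotic basis of order h for some positive integer h. -/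
open Pointwise Filter

/-!
Since `gcd A = 1`, every large integer is a finite sum of elements of `A`
(`Nat.exists_mem_closure_of_ge`), so for `G` large there is `k` such that every `m ∈ [G, 2G]` is a
sum of `k` elements of `A`. Taking `G` also past the point from which `A(n) ≥ (d_L(A) / 2) n`, the
set `B = A ∪ [0, G]` has positive Schnirelmann density, and `m ∈ B` makes `m + G` a sum of `k + 1`
elements of `A`. Iterating Schnirelmann's inequality `σ(A + B) ≥ σ(A) + σ(B) - σ(A) σ(B)` gives
`h • B = ℕ` for some `h`, so every `n ≥ h G` is a sum of `h (k + 1)` elements of `A`.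
-/

open Finset

section Schnirelmann

variable {A B : Set ℕ}

lemma card_filter_Ioc_add_add_one_le [DecidablePred (· ∈ B)] [DecidablePred (· ∈ A + B)] {c : ℕ}
    (hc : c + 1 ∈ A) (hB : 0 ∈ B) (m : ℕ) :
    #{x ∈ Ioc 0 c | x ∈ A + B} + 1 + #{x ∈ Ioc 0 m | x ∈ B} ≤
      #{x ∈ Ioc 0 (c + 1 + m) | x ∈ A + B} := by
  set shifted := {x ∈ Ioc 0 m | x ∈ B}.image (c + 1 + ·)
  have hdisj : Disjoint {x ∈ Ioc 0 c | x ∈ A + B} (insert (c + 1) shifted) := by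
    simp only [shifted, disjoint_left, mem_filter, mem_Ioc, mem_insert, mem_image]
    omega
  have hnotMem : c + 1 ∉ shifted := by
    simp only [shifted, mem_image, mem_filter, mem_Ioc]
    omega
  calc #{x ∈ Ioc 0 c | x ∈ A + B} + 1 + #{x ∈ Ioc 0 m | x ∈ B}
      = #({x ∈ Ioc 0 c | x ∈ A + B} ∪ insert (c + 1) shifted) := by
        rw [card_union_of_disjoint hdisj, card_insert_of_notMem hnotMem,
          card_image_of_injective _ (add_right_injective (c + 1))]
        ring
    _ ≤ #{x ∈ Ioc 0 (c + 1 + m) | x ∈ A + B} := by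
        refine card_le_card fun x hx ↦ ?_
        simp only [shifted, mem_union, mem_insert, mem_filter, mem_Ioc, mem_image] at hx ⊢
        rcases hx with ⟨hx, hxAB⟩ | rfl | ⟨b, ⟨hb, hbB⟩, rfl⟩
        · exact ⟨by omega, hxAB⟩
        · exact ⟨by omega, c + 1, hc, 0, hB, rfl⟩
        · exact ⟨by omega, c + 1, hc, b, hbB, rfl⟩

lemma card_filter_Ioc_eq_add_one [DecidablePred (· ∈ A)] {c m : ℕ} (hc : c + 1 ∈ A)
    (hgap : ∀ x ∈ A, x ≤ c + 1 + m → x ≤ c + 1) :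
    #{x ∈ Ioc 0 (c + 1 + m) | x ∈ A} = #{x ∈ Ioc 0 c | x ∈ A} + 1 := by
  have : {x ∈ Ioc 0 (c + 1 + m) | x ∈ A} = insert (c + 1) {x ∈ Ioc 0 c | x ∈ A} := by
    ext x
    simp only [mem_filter, mem_Ioc, mem_insert]
    constructor
    · rintro ⟨hx, hxA⟩
      have := hgap x hxA hx.2
      by_cases hxc : x = c + 1
      · exact Or.inl hxc
      · exact Or.inr ⟨by omega, hxA⟩
    · rintro (rfl | ⟨hx, hxA⟩)
      · exact ⟨by omega, hc⟩
      · exact ⟨by omega, hxA⟩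
  rw [this, card_insert_of_notMem (by simp)]

lemma card_filter_Ioc_add_mul_le [DecidablePred (· ∈ A)] [DecidablePred (· ∈ B)]
    [DecidablePred (· ∈ A + B)] (hA : 0 ∈ A) (hB : 0 ∈ B) (n : ℕ) :
    #{x ∈ Ioc 0 n | x ∈ A} + schnirelmannDensity B * (n - #{x ∈ Ioc 0 n | x ∈ A}) ≤
      #{x ∈ Ioc 0 n | x ∈ A + B} := by
  induction n using Nat.strong_induction_on with | _ n ih =>
  rcases {x ∈ Ioc 0 n | x ∈ A}.eq_empty_or_nonempty with hempty | hne
  · have hBAB : #{x ∈ Ioc 0 n | x ∈ B} ≤ #{x ∈ Ioc 0 n | x ∈ A + B} :=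
      card_le_card <| monotone_filter_right _ fun b _ hb ↦ ⟨0, hA, b, hb, zero_add b⟩
    rw [hempty, card_empty, Nat.cast_zero, zero_add, sub_zero]
    exact schnirelmannDensity_mul_le_card_filter.trans (by exact_mod_cast hBAB)
  -- split `(0, n]` at the largest element `c + 1` of `A` in it
  obtain ⟨hmemIoc, hcA⟩ := mem_filter.1 (max'_mem _ hne)
  rw [mem_Ioc] at hmemIoc
  obtain ⟨c, hc⟩ : ∃ c, c + 1 = max' _ hne := ⟨max' _ hne - 1, by omega⟩
  obtain ⟨m, rfl⟩ : ∃ m, n = c + 1 + m := ⟨n - (c + 1), by omega⟩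
  rw [← hc] at hcA
  have hgap : ∀ x ∈ A, x ≤ c + 1 + m → x ≤ c + 1 := fun x hxA hx ↦
    x.eq_zero_or_pos.elim (by omega) fun hx0 ↦
      hc ▸ le_max' _ x (mem_filter.2 ⟨mem_Ioc.2 ⟨hx0, hx⟩, hxA⟩)
  have hIH := ih c (by omega)
  have hstep : (#{x ∈ Ioc 0 c | x ∈ A + B} : ℝ) + 1 + #{x ∈ Ioc 0 m | x ∈ B} ≤
      #{x ∈ Ioc 0 (c + 1 + m) | x ∈ A + B} := by
    exact_mod_cast card_filter_Ioc_add_add_one_le hcA hB m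
  have hBm := schnirelmannDensity_mul_le_card_filter (A := B) (n := m)
  rw [card_filter_Ioc_eq_add_one hcA hgap]
  push_cast
  linarith

theorem le_schnirelmannDensity_add [DecidablePred (· ∈ A)] [DecidablePred (· ∈ B)]
    [DecidablePred (· ∈ A + B)] (hA : 0 ∈ A) (hB : 0 ∈ B) :
    schnirelmannDensity A + schnirelmannDensity B - schnirelmannDensity A * schnirelmannDensity B
      ≤ schnirelmannDensity (A + B) := by
  rw [le_schnirelmannDensity_iff]
  intro n hn
  rw [le_div_iff₀ (by exact_mod_cast hn)]
  have hcount := card_filter_Ioc_add_mul_le hA hB n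
  have hαn := schnirelmannDensity_mul_le_card_filter (A := A) (n := n)
  have hβ := schnirelmannDensity_le_one (A := B)
  nlinarith

open scoped Classical in
lemma one_sub_pow_le_schnirelmannDensity_nsmul [DecidablePred (· ∈ A)] (hA : 0 ∈ A) (j : ℕ) :
    1 - (1 - schnirelmannDensity A) ^ j ≤ schnirelmannDensity (j • A) := by
  induction j with
  | zero => simpa using schnirelmannDensity_nonneg
  | succ j ih =>
    rw [succ_nsmul]
    have hadd := le_schnirelmannDensity_add (Set.zero_mem_nsmul (n := j) hA) hA
    have hσ := schnirelmannDensity_le_one (A := A)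
    rw [pow_succ]
    nlinarith

theorem exists_nsmul_eq_univ_of_schnirelmannDensity_pos [DecidablePred (· ∈ A)] (hA : 0 ∈ A)
    (hσ : 0 < schnirelmannDensity A) : ∃ h, 0 < h ∧ h • A = Set.univ := by
  classical
  obtain ⟨j, hj⟩ := exists_pow_lt_of_lt_one (by norm_num : (0 : ℝ) < 1 / 2)
    (by linarith : 1 - schnirelmannDensity A < 1)
  have hj0 : j ≠ 0 := by rintro rfl; norm_num at hj
  have hdens := one_sub_pow_le_schnirelmannDensity_nsmul hA j
  refine ⟨j + j, by omega, ?_⟩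
  rw [add_nsmul]
  exact add_eq_univ_of_one_le_schirelmannDensity_add_schnirelmannDensity
    (Set.zero_mem_nsmul hA) (Set.zero_mem_nsmul hA) (by linarith)

end Schnirelmann

lemma exists_mem_nsmul_of_mem_addSubmonoidClosure {M : Type*} [AddMonoid M] {A : Set M} {x : M}
    (hx : x ∈ AddSubmonoid.closure A) : ∃ k : ℕ, x ∈ k • A := by
  induction hx using AddSubmonoid.closure_induction with
  | mem x hx => exact ⟨1, by rwa [one_nsmul]⟩
  | zero => exact ⟨0, by rw [zero_nsmul]; rfl⟩
  | add x y _ _ hx hy =>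
    obtain ⟨k, hk⟩ := hx
    obtain ⟨l, hl⟩ := hy
    exact ⟨k + l, by rw [add_nsmul]; exact Set.add_mem_add hk hl⟩

lemma exists_subset_nsmul_of_subset_addSubmonoidClosure {M : Type*} [AddMonoid M] {A : Set M}
    (h0 : 0 ∈ A) (s : Finset M) (hs : (s : Set M) ⊆ AddSubmonoid.closure A) :
    ∃ k : ℕ, (s : Set M) ⊆ k • A := by
  choose! k hk using fun x (hx : x ∈ s) ↦ exists_mem_nsmul_of_mem_addSubmonoidClosure (hs hx)
  exact ⟨s.sup k, fun x hx ↦ Set.nsmul_subset_nsmul_right h0 (le_sup hx) (hk x hx)⟩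

lemma nsmul_subset_preimage_add_nsmul {M : Type*} [AddCommMonoid M] {B S : Set M} {g : M}
    (h : B ⊆ (· + g) ⁻¹' S) (j : ℕ) : j • B ⊆ (· + j • g) ⁻¹' (j • S) := by
  induction j with
  | zero => simp
  | succ j ih =>
    rw [succ_nsmul]
    rintro _ ⟨x, hx, b, hb, rfl⟩
    rw [Set.mem_preimage, succ_nsmul, succ_nsmul, add_add_add_comm]
    exact Set.add_mem_add (ih hx) (h hb)

section LowerDensity

variable {A : Set ℕ} [DecidablePred (· ∈ A)]

lemma countingFn_eq_card_filter (n : ℕ) :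
    countingFn A n = #{a ∈ Ioc 0 n | a ∈ A} := by
  rw [countingFn, ← Set.ncard_coe_finset]
  congr 1
  ext a
  simp only [Set.mem_inter_iff, Set.mem_Icc, coe_filter, mem_Ioc, Set.mem_ofPred_eq,
    Nat.one_le_iff_ne_zero, Nat.pos_iff_ne_zero]
  tauto

lemma eventually_mul_le_card_filter_of_lt_lowerDensity {δ : ℝ} (hδ : δ < lowerDensity A) :
    ∀ᶠ n : ℕ in atTop, δ * n ≤ #{a ∈ Ioc 0 n | a ∈ A} := by
  have hbdd : IsBoundedUnder (· ≥ ·) atTop (fun n : ℕ ↦ (countingFn A n : ℝ) / n) :=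
    isBoundedUnder_of ⟨0, fun n ↦ by positivity⟩
  filter_upwards [eventually_lt_of_lt_liminf hδ hbdd, eventually_gt_atTop 0] with n hn hn0
  rw [lt_div_iff₀ (by exact_mod_cast hn0), countingFn_eq_card_filter] at hn
  exact hn.le

lemma eventually_schnirelmannDensity_union_Iic_pos (hA : 0 < lowerDensity A) :
    ∀ᶠ G : ℕ in atTop, 0 < schnirelmannDensity (A ∪ Set.Iic G) := by
  obtain ⟨N, hN⟩ := eventually_atTop.1
    (eventually_mul_le_card_filter_of_lt_lowerDensity (half_lt_self hA))
  filter_upwards [eventually_ge_atTop N] with G hG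
  refine (lt_min (half_pos hA) one_pos).trans_le (le_schnirelmannDensity_iff.2 fun n hn ↦ ?_)
  rw [le_div_iff₀ (by exact_mod_cast hn)]
  rcases le_or_gt n G with hnG | hGn
  · have hall : {a ∈ Ioc 0 n | a ∈ A ∪ Set.Iic G} = Ioc 0 n :=
      filter_true_of_mem fun a ha ↦ Set.mem_union_right A ((mem_Ioc.1 ha).2.trans hnG)
    rw [hall, Nat.card_Ioc, Nat.sub_zero]
    exact mul_le_of_le_one_left (Nat.cast_nonneg n) (min_le_right _ _)
  · calc min (lowerDensity A / 2) 1 * n ≤ lowerDensity A / 2 * n := by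
          gcongr
          exact min_le_left _ _
      _ ≤ #{a ∈ Ioc 0 n | a ∈ A} := hN n (by omega)
      _ ≤ #{a ∈ Ioc 0 n | a ∈ A ∪ Set.Iic G} := by
          exact_mod_cast card_le_card (monotone_filter_right _ fun a _ h ↦ Or.inl h)

end LowerDensity

theorem nash_nathanson (A : Set ℕ) (h0 : 0 ∈ A)
    (hd : 0 < lowerDensity A)
    (hgcd : ∀ d : ℕ, (∀ a ∈ A, d ∣ a) → d = 1) :
    ∃ h : ℕ, 0 < h ∧ IsAsymptoticBasisOfOrder A h := by
  classical
  have hsetGcd : Nat.setGcd A = 1 := hgcd _ fun a ha ↦ Nat.setGcd_dvd_of_mem ha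
  obtain ⟨N, hN⟩ := Nat.exists_mem_closure_of_ge A
  obtain ⟨G, hGσ, hNG⟩ :=
    ((eventually_schnirelmannDensity_union_Iic_pos hd).and (eventually_ge_atTop N)).exists
  obtain ⟨k, hk⟩ := exists_subset_nsmul_of_subset_addSubmonoidClosure h0 (Icc G (2 * G))
    fun m hm ↦ hN m (hNG.trans (mem_Icc.1 (mem_coe.1 hm)).1) (hsetGcd.symm ▸ one_dvd m)
  have hB : A ∪ Set.Iic G ⊆ (· + G) ⁻¹' ((k + 1) • A) := by
    rintro m (hm | hm) <;> rw [Set.mem_preimage, succ_nsmul]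
    · exact add_comm G m ▸ Set.add_mem_add (hk (mem_coe.2 (mem_Icc.2 ⟨le_rfl, by omega⟩))) hm
    · exact ⟨m + G, hk (mem_coe.2 (mem_Icc.2 ⟨by omega, by rw [Set.mem_Iic] at hm; omega⟩)),
        0, h0, rfl⟩
  obtain ⟨h, hh0, hh⟩ :=
    exists_nsmul_eq_univ_of_schnirelmannDensity_pos (Set.mem_union_right A (Nat.zero_le G)) hGσ
  refine ⟨h * (k + 1), by positivity, ?_⟩
  filter_upwards [eventually_ge_atTop (h • G)] with n hn
  obtain ⟨m, rfl⟩ := exists_add_of_le hn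
  have hm := nsmul_subset_preimage_add_nsmul hB h (hh ▸ Set.mem_univ m)
  rw [Set.mem_preimage, ← mul_nsmul', add_comm m] at hm
  exact Set.mem_nsmul_iff_sum.1 hm
end

section
/- (Khinchin) The set of squares {0, 1, 4, 9, 16, ...} is an essential component: for every set A of nonnegative integers with 0 < σ(A) < 1, one has σ(A + {n² : n ≥ 0}) > σ(A). -/
open Pointwise Filter

/-! Khinchin's theorem is the case `h = 4` of a bound valid for every basis `B` of order `h`:
`σ(A + B) ≥ σ(A) + σ(A) (1 - σ(A))² / (2h)`.

Fix `n` and let `g` be the number of gaps of `A` in `[1, n]`. For a gap `k` and `a ∈ A` with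
`a < k`, write `k - a` as a sum of `h` elements of `B` (a fixed representation) and walk from `a`
to `k` along the partial sums. The first point of the walk outside `A` lies in `(A + B) \ A`,
and together with `k - a` and the index of the step it determines `(a, k)`. Hence
`∑_{gaps k} A(k) ≤ h n N`, where `N` counts `(A + B) \ A` in `[1, n]`, while the left side is at
least `σ(A) g (g + 1) / 2` because the gaps are `g` distinct positive integers. The lower bound
for `(A + B)(n) = n - g + N` follows by minimising over `0 ≤ g ≤ (1 - σ(A)) n`. -/

open Finset

namespace Fin

theorem exists_castSucc_and_not_succ {n : ℕ} {p : Fin (n + 1) → Prop} (h0 : p 0)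
    (hlast : ¬ p (last n)) : ∃ i : Fin n, p i.castSucc ∧ ¬ p i.succ := by
  by_contra! h
  exact hlast (Fin.induction h0 h (last n))

theorem partialSum_last {M : Type*} [AddCommMonoid M] {n : ℕ} (f : Fin n → M) :
    partialSum f (last n) = ∑ i, f i := by
  rw [partialSum, val_last, List.take_of_length_le (by simp), List.sum_ofFn]

theorem monotone_partialSum {M : Type*} [AddMonoid M] [PartialOrder M] [CanonicallyOrderedAdd M]
    {n : ℕ} (f : Fin n → M) : Monotone (partialSum f) :=
  monotone_iff_le_succ.2 fun i => by rw [partialSum_succ]; exact le_self_add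

end Fin

theorem Finset.card_mul_card_add_one_le_two_mul_sum (s : Finset ℕ) (hs : 0 ∉ s) :
    #s * (#s + 1) ≤ 2 * ∑ k ∈ s, k := by
  induction s using Finset.induction_on_max with
  | empty => simp
  | insert a t hlt ih =>
    have ha : a ∉ t := fun h => (hlt a h).false
    have ht : 0 ∉ t := fun h => hs (mem_insert_of_mem h)
    have hcard : #t + 1 ≤ a := by
      have : #t ≤ #(Ico 1 a) := card_le_card fun k hk =>
        mem_Ico.2 ⟨Nat.one_le_iff_ne_zero.2 (ne_of_mem_of_not_mem hk ht), hlt k hk⟩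
      rw [Nat.card_Ico] at this
      have : a ≠ 0 := ne_of_mem_of_not_mem (mem_insert_self a t) hs
      omega
    rw [card_insert_of_notMem ha, sum_insert ha]
    nlinarith [ih ht]

theorem countingFn_eq_card (A : Set ℕ) [DecidablePred (· ∈ A)] (n : ℕ) :
    countingFn A n = #{k ∈ Icc 1 n | k ∈ A} := by
  rw [countingFn, ← Set.ncard_coe_finset, coe_filter, Set.inter_comm]
  simp only [mem_Icc, Set.inter_def, Set.mem_Icc]

theorem countingFn_add_countingFn_sdiff {A C : Set ℕ} (h : A ⊆ C) (n : ℕ) :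
    countingFn A n + countingFn (C \ A) n = countingFn C n := by
  classical
  simp only [countingFn_eq_card]
  rw [← card_union_of_disjoint (disjoint_filter.2 fun _ _ hA hCA => hCA.2 hA), ← filter_or]
  congr 1
  ext k
  simp only [mem_filter, Set.mem_sdiff]
  have := @h k
  tauto

theorem shnirelmanDensity_nonneg (A : Set ℕ) : 0 ≤ shnirelmanDensity A :=
  Real.iInf_nonneg fun _ => by positivity

theorem shnirelmanDensity_mul_le_countingFn (A : Set ℕ) {n : ℕ} (hn : 0 < n) :
    shnirelmanDensity A * n ≤ countingFn A n := by
  have hbdd : BddBelow (Set.range fun m : {m : ℕ // 0 < m} => (countingFn A m : ℝ) / m) :=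
    ⟨0, by rintro _ ⟨m, rfl⟩; positivity⟩
  rw [← le_div_iff₀ (by exact_mod_cast hn)]
  exact ciInf_le hbdd ⟨n, hn⟩

theorem le_shnirelmanDensity {A : Set ℕ} {x : ℝ}
    (h : ∀ n : ℕ, 0 < n → x * n ≤ countingFn A n) : x ≤ shnirelmanDensity A :=
  le_ciInf fun n => (le_div_iff₀ (by exact_mod_cast n.2)).2 (h n n.2)

namespace IsBasisOfOrder

variable {B : Set ℕ} {h : ℕ}

theorem pos (hB : IsBasisOfOrder B h) : 0 < h := Nat.pos_of_ne_zero <| by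
  rintro rfl
  obtain ⟨c, -, hc⟩ := hB 1
  simp at hc

theorem zero_mem (hB : IsBasisOfOrder B h) : 0 ∈ B := by
  obtain ⟨c, hcB, hc⟩ := hB 0
  exact sum_eq_zero_iff.1 hc ⟨0, hB.pos⟩ (mem_univ _) ▸ hcB _

end IsBasisOfOrder

theorem isBasisOfOrder_squares : IsBasisOfOrder {m : ℕ | ∃ n : ℕ, m = n ^ 2} 4 := fun n => by
  obtain ⟨a, b, c, d, h⟩ := Nat.sum_four_squares n
  exact ⟨![a ^ 2, b ^ 2, c ^ 2, d ^ 2], fun i => by fin_cases i <;> exact ⟨_, rfl⟩,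
    by simpa [Fin.sum_univ_four] using h⟩

theorem exists_add_partialSum_succ_mem_add_sdiff {A B : Set ℕ} {h a : ℕ} {f : Fin h → ℕ}
    (hf : ∀ i, f i ∈ B) (ha : a ∈ A) (hsum : a + ∑ i, f i ∉ A) :
    ∃ j : Fin h, a + Fin.partialSum f j.succ ∈ (A + B) \ A := by
  obtain ⟨j, hjA, hj⟩ :=
    Fin.exists_castSucc_and_not_succ (p := fun i => a + Fin.partialSum f i ∈ A)
      (by simpa using ha) (by rwa [Fin.partialSum_last])
  refine ⟨j, ?_, hj⟩
  rw [Fin.partialSum_succ, ← add_assoc]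
  exact Set.add_mem_add hjA (hf j)

theorem IsBasisOfOrder.sum_countingFn_le {B : Set ℕ} {h : ℕ} (hB : IsBasisOfOrder B h)
    (A : Set ℕ) [DecidablePred (· ∈ A)] (n : ℕ) :
    ∑ k ∈ Icc 1 n with k ∉ A, countingFn A k ≤ h * n * countingFn ((A + B) \ A) n := by
  classical
  choose rep hrepB hrep using hB
  set T := {k ∈ Icc 1 n | k ∉ A}.sigma fun k => {a ∈ Icc 1 k | a ∈ A}
  set U := {c ∈ Icc 1 n | c ∈ (A + B) \ A} ×ˢ Icc 1 n ×ˢ (univ : Finset (Fin h))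
  -- `ψ (c, d, j)` recovers `(k, a)` from `c ∈ (A + B) \ A`, `d = k - a` and the step `j`.
  let ψ : ℕ × ℕ × Fin h → Σ _ : ℕ, ℕ := fun p =>
    ⟨p.1 - Fin.partialSum (rep p.2.1) p.2.2.succ + p.2.1,
      p.1 - Fin.partialSum (rep p.2.1) p.2.2.succ⟩
  have hT : T ⊆ U.image ψ := by
    rintro ⟨k, a⟩ hka
    simp only [T, mem_sigma, mem_filter, mem_Icc] at hka
    obtain ⟨⟨⟨hk1, hkn⟩, hkA⟩, ⟨ha1, hak⟩, haA⟩ := hka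
    have hak : a < k := lt_of_le_of_ne hak (ne_of_mem_of_not_mem haA hkA)
    set d := k - a
    have hsum : a + ∑ i, rep d i = k := by rw [hrep]; omega
    obtain ⟨j, hj⟩ := exists_add_partialSum_succ_mem_add_sdiff (hrepB d) haA (hsum ▸ hkA)
    have hle : Fin.partialSum (rep d) j.succ ≤ d :=
      (Fin.monotone_partialSum (rep d) (Fin.le_last _)).trans_eq
        ((Fin.partialSum_last _).trans (hrep d))
    refine mem_image.2 ⟨(a + Fin.partialSum (rep d) j.succ, d, j), ?_, ?_⟩
    · simp only [U, mem_product, mem_filter, mem_Icc, mem_univ]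
      exact ⟨⟨⟨by omega, by omega⟩, hj⟩, ⟨by omega, by omega⟩, trivial⟩
    · simp only [ψ, Sigma.mk.inj_iff, heq_iff_eq]
      omega
  calc ∑ k ∈ Icc 1 n with k ∉ A, countingFn A k = #T := by
        rw [card_sigma]; exact sum_congr rfl fun k _ => countingFn_eq_card A k
    _ ≤ #U := (card_le_card hT).trans card_image_le
    _ = h * n * countingFn ((A + B) \ A) n := by
        rw [card_product, card_product, countingFn_eq_card, card_univ, Fintype.card_fin,
          Nat.card_Icc, Nat.add_sub_cancel]
        ring

theorem shnirelmanDensity_mul_le_sum_countingFn (A : Set ℕ) (s : Finset ℕ) (hs : 0 ∉ s) :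
    shnirelmanDensity A * (#s * (#s + 1)) ≤ 2 * ∑ k ∈ s, (countingFn A k : ℝ) := by
  have hsum := (Nat.cast_le (α := ℝ)).2 (card_mul_card_add_one_le_two_mul_sum s hs)
  push_cast at hsum
  calc shnirelmanDensity A * (#s * (#s + 1))
      ≤ shnirelmanDensity A * (2 * ∑ k ∈ s, (k : ℝ)) :=
        mul_le_mul_of_nonneg_left hsum (shnirelmanDensity_nonneg A)
    _ = 2 * ∑ k ∈ s, shnirelmanDensity A * k := by rw [mul_left_comm, mul_sum]
    _ ≤ 2 * ∑ k ∈ s, (countingFn A k : ℝ) := by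
        gcongr with k hk
        exact shnirelmanDensity_mul_le_countingFn A
          (Nat.pos_of_ne_zero (ne_of_mem_of_not_mem hk hs))

theorem add_mul_le_of_mul_sq_le {α h n g N : ℝ} (hα : 0 ≤ α) (hh : 1 ≤ h) (hn : 0 < n)
    (hg : g ≤ (1 - α) * n) (hgN : α * g ^ 2 ≤ 2 * h * n * N) :
    (α + α * (1 - α) ^ 2 / (2 * h)) * n ≤ n - g + N := by
  -- `2hn` times the difference of the two sides is at least this product.
  have hfactor : 0 ≤ ((1 - α) * n - g) * (2 * h * n - α * ((1 - α) * n + g)) := by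
    refine mul_nonneg (by linarith) ?_
    nlinarith [mul_le_mul_of_nonneg_left hg hα, sq_nonneg (1 - 2 * α)]
  rw [← mul_le_mul_iff_of_pos_left (by positivity : 0 < 2 * h * n)]
  field_simp
  nlinarith

theorem IsBasisOfOrder.shnirelmanDensity_add_le {B : Set ℕ} {h : ℕ} (hB : IsBasisOfOrder B h)
    (A : Set ℕ) :
    shnirelmanDensity A + shnirelmanDensity A * (1 - shnirelmanDensity A) ^ 2 / (2 * h) ≤
      shnirelmanDensity (A + B) := by
  classical
  refine le_shnirelmanDensity fun n hn => ?_
  set gaps := {k ∈ Icc 1 n | k ∉ A}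
  have hsplit : countingFn A n + #gaps = n := by
    rw [countingFn_eq_card, card_filter_add_card_filter_not, Nat.card_Icc, Nat.add_sub_cancel]
  have hlow := shnirelmanDensity_mul_le_sum_countingFn A gaps (by simp [gaps])
  have hup : (∑ k ∈ gaps, countingFn A k : ℝ) ≤ h * n * countingFn ((A + B) \ A) n := by
    exact_mod_cast hB.sum_countingFn_le A n
  have hA := shnirelmanDensity_mul_le_countingFn A hn
  rw [← countingFn_add_countingFn_sdiff (Set.subset_add_left A hB.zero_mem) n, Nat.cast_add]
  have hA' : (countingFn A n : ℝ) = n - #gaps := by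
    rw [eq_sub_iff_add_eq]; exact_mod_cast hsplit
  rw [hA'] at hA ⊢
  refine add_mul_le_of_mul_sq_le (shnirelmanDensity_nonneg A) (by exact_mod_cast hB.pos)
    (by exact_mod_cast hn) (by linarith) ?_
  nlinarith [shnirelmanDensity_nonneg A]

theorem khinchin_squares_essential_component (A : Set ℕ)
    (h0 : 0 < shnirelmanDensity A) (h1 : shnirelmanDensity A < 1) :
    shnirelmanDensity A < shnirelmanDensity (A + {m : ℕ | ∃ n : ℕ, m = n ^ 2}) := by
  have hinc := isBasisOfOrder_squares.shnirelmanDensity_add_le A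
  have hgain : 0 < shnirelmanDensity A * (1 - shnirelmanDensity A) ^ 2 / (2 * (4 : ℕ)) := by
    have : 0 < 1 - shnirelmanDensity A := sub_pos.2 h1
    positivity
  linarith
end

section
/- (Erdős, multiplicative Erdős–Turán theorem) Let A be a set of positive integers and for each positive integer n let g(n) be the number of representations of n as a product n = a·a' with a, a' ∈ A and a ≤ a'. If there exists n₀ such that g(n) ≥ 1 for all n > n₀, then the function g is unbounded, i.e., limsup_{n→∞} g(n) = ∞. -/
open Pointwise Filter

/-!
Let `P` be the primes above `n₀`. For a finite `s ⊆ P`, the squarefree number `∏ s` exceeds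
`n₀`, so it is a product of two elements of `A`, i.e. `s` splits as `t ⊔ (s \ t)` with
`∏ t, ∏ (s \ t) ∈ A`. Colour the `j`-subsets of `P` by whether their product lies in `A`;
infinite Ramsey for the sizes `j ∈ (K, 2K+1]` gives an infinite `R ⊆ P` homogeneous for all of
them, and splitting a `(2K+1)`-subset of `R` shows that some size `k > K` is coloured "in `A`".
Then for any `2k` primes `s ⊆ R`, each of the `C(2k, k)` subsets `t` of size `k` yields the
ordered representation `∏ s = ∏ t · ∏ (s \ t)`, so `g (∏ s) ≥ C(2k, k) / 2 ≥ k`.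
-/

/-- `R` is homogeneous for the 2-colouring `H` of `k`-sets, the colour being the proposition `c`. -/
def IsHomogeneous (H : Finset ℕ → Prop) (k : ℕ) (R : Set ℕ) : Prop :=
  ∃ c : Prop, ∀ s : Finset ℕ, ↑s ⊆ R → s.card = k → (H s ↔ c)

namespace IsHomogeneous

variable {H : Finset ℕ → Prop} {k : ℕ} {R : Set ℕ}

lemma mono {S : Set ℕ} (h : IsHomogeneous H k R) (hSR : S ⊆ R) : IsHomogeneous H k S :=
  let ⟨c, hc⟩ := h
  ⟨c, fun s hs ↦ hc s (hs.trans hSR)⟩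

lemma iff (h : IsHomogeneous H k R) {s t : Finset ℕ} (hs : ↑s ⊆ R) (hsk : s.card = k)
    (ht : ↑t ⊆ R) (htk : t.card = k) : H s ↔ H t :=
  let ⟨_, hc⟩ := h
  (hc s hs hsk).trans (hc t ht htk).symm

end IsHomogeneous

lemma exists_strictMono_of_forall_infinite (Q : ℕ → Set ℕ → Prop)
    (hQ : ∀ S : Set ℕ, S.Infinite → ∃ S' ⊆ S \ {sInf S}, S'.Infinite ∧ Q (sInf S) S')
    {R : Set ℕ} (hR : R.Infinite) :
    ∃ a : ℕ → ℕ, StrictMono a ∧ (∀ n, a n ∈ R) ∧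
      ∀ n, ∃ S, Q (a n) S ∧ ∀ j, n < j → a j ∈ S := by
  choose next hnext_sub hnext_inf hnext_Q using hQ
  let step : {S : Set ℕ // S.Infinite} → {S : Set ℕ // S.Infinite} :=
    fun S ↦ ⟨next S.1 S.2, hnext_inf S.1 S.2⟩
  let F : ℕ → Set ℕ := fun n ↦ (step^[n] ⟨R, hR⟩).1
  have hF_succ (n : ℕ) : ∃ hF : (F n).Infinite, F (n + 1) = next (F n) hF :=
    ⟨(step^[n] ⟨R, hR⟩).2, by simp only [F, Function.iterate_succ_apply']; rfl⟩
  have hF_inf (n : ℕ) : (F n).Infinite := (hF_succ n).1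
  have hF_sub (n : ℕ) : F (n + 1) ⊆ F n \ {sInf (F n)} := by
    obtain ⟨hF, h⟩ := hF_succ n
    exact h ▸ hnext_sub _ hF
  have hF_anti : Antitone F :=
    antitone_nat_of_succ_le fun n ↦ (hF_sub n).trans Set.sdiff_subset
  have hF_mem (n : ℕ) : sInf (F n) ∈ F n := Nat.sInf_mem (hF_inf n).nonempty
  refine ⟨fun n ↦ sInf (F n), strictMono_nat_of_lt_succ fun n ↦ ?_,
    fun n ↦ hF_anti (Nat.zero_le n) (hF_mem n), fun n ↦ ⟨F (n + 1), ?_, fun j hj ↦ ?_⟩⟩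
  · obtain ⟨hmem, hne⟩ := hF_sub n (hF_mem (n + 1))
    exact (Nat.sInf_le hmem).lt_of_ne' hne
  · obtain ⟨hF, h⟩ := hF_succ n
    exact h ▸ hnext_Q _ hF
  · exact hF_anti hj (hF_mem j)

theorem exists_infinite_isHomogeneous (k : ℕ) (H : Finset ℕ → Prop) {R : Set ℕ}
    (hR : R.Infinite) : ∃ R' ⊆ R, R'.Infinite ∧ IsHomogeneous H k R' := by
  induction k generalizing H R with
  | zero =>
    refine ⟨R, subset_rfl, hR, H ∅, fun s _ hs ↦ ?_⟩
    rw [Finset.card_eq_zero.1 hs]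
  | succ k ih =>
    obtain ⟨a, ha_mono, haR, hQ⟩ := exists_strictMono_of_forall_infinite
      (fun x S ↦ IsHomogeneous (fun s ↦ H (insert x s)) k S)
      (fun S hS ↦ ih _ (hS.sdiff (Set.finite_singleton _))) hR
    choose S hS_hom haS using hQ
    choose c hc using hS_hom
    obtain ⟨c₀, hc₀⟩ := Finite.exists_infinite_fiber c
    refine ⟨a '' (c ⁻¹' {c₀}), Set.image_subset_iff.2 fun n _ ↦ haR n,
      (Set.infinite_coe_iff.1 hc₀).image ha_mono.injective.injOn, c₀, fun s hs hsk ↦ ?_⟩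
    -- `s = insert (a i) (s.erase (a i))` with `a i = min s` of colour `c₀`, `s.erase (a i) ⊆ S i`
    have hne : s.Nonempty := Finset.card_pos.1 (by omega)
    obtain ⟨i, hi, hai⟩ := hs (s.min'_mem hne)
    have herase : ↑(s.erase (a i)) ⊆ S i := fun y hy ↦ by
      obtain ⟨hyi, hys⟩ := Finset.mem_erase.1 hy
      obtain ⟨j, -, rfl⟩ := hs hys
      refine haS i j (ha_mono.lt_iff_lt.1 (lt_of_le_of_ne ?_ hyi.symm))
      exact hai ▸ s.min'_le _ hys
    have hmem : a i ∈ s := hai ▸ s.min'_mem hne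
    rw [← Finset.insert_erase hmem, ← Set.mem_singleton_iff.1 hi]
    exact hc i _ herase (by rw [Finset.card_erase_of_mem hmem, hsk]; rfl)

theorem exists_infinite_forall_isHomogeneous (H : Finset ℕ → Prop) (J : Finset ℕ) {R : Set ℕ}
    (hR : R.Infinite) : ∃ R' ⊆ R, R'.Infinite ∧ ∀ j ∈ J, IsHomogeneous H j R' := by
  induction J using Finset.induction_on with
  | empty => exact ⟨R, subset_rfl, hR, by simp⟩
  | insert j J _ ih =>
    obtain ⟨R₁, hR₁R, hR₁, hJ⟩ := ih
    obtain ⟨R₂, hR₂R₁, hR₂, hj⟩ := exists_infinite_isHomogeneous j H hR₁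
    exact ⟨R₂, hR₂R₁.trans hR₁R, hR₂,
      (Finset.forall_mem_insert _ _ _).2 ⟨hj, fun i hi ↦ (hJ i hi).mono hR₂R₁⟩⟩

theorem exists_infinite_forall_card_eq_of_forall_exists_split (H : Finset ℕ → Prop) {P : Set ℕ}
    (hP : P.Infinite)
    (hsplit : ∀ s : Finset ℕ, ↑s ⊆ P → s.Nonempty → ∃ t ⊆ s, H t ∧ H (s \ t)) (K : ℕ) :
    ∃ k, K < k ∧ ∃ R ⊆ P, R.Infinite ∧ ∀ s : Finset ℕ, ↑s ⊆ R → s.card = k → H s := by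
  obtain ⟨R, hRP, hR, hhom⟩ := exists_infinite_forall_isHomogeneous H (Finset.Ioc K (2 * K + 1)) hP
  by_contra! hbad
  have hfalse (u : Finset ℕ) (huR : ↑u ⊆ R) (hK : K < u.card) (hK' : u.card ≤ 2 * K + 1) :
      ¬ H u := by
    obtain ⟨v, hvR, hvk, hv⟩ := hbad u.card hK R hRP hR
    rwa [(hhom u.card (Finset.mem_Ioc.2 ⟨hK, hK'⟩)).iff huR rfl hvR hvk]
  obtain ⟨s, hsR, hsk⟩ := hR.exists_subset_card_eq (2 * K + 1)
  obtain ⟨t, hts, ht, hst⟩ :=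
    hsplit s (hsR.trans hRP) (Finset.card_pos.1 (by omega))
  have hcard : t.card + (s \ t).card = 2 * K + 1 := by
    rw [Finset.card_sdiff_of_subset hts, ← hsk]
    have := Finset.card_le_card hts
    omega
  -- the larger of the two parts has size in `(K, 2K+1]`, where every set fails `H`
  rcases Nat.lt_or_ge K t.card with hK | hK
  · exact hfalse t ((Finset.coe_subset.2 hts).trans hsR) hK (by omega) ht
  · exact hfalse (s \ t) ((Finset.coe_subset.2 Finset.sdiff_subset).trans hsR) (by omega)
      (by omega) hst

namespace Nat

lemma squarefree_prod_of_forall_prime {s : Finset ℕ} (hs : ∀ p ∈ s, p.Prime) :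
    Squarefree (∏ p ∈ s, p) := by
  refine Finset.squarefree_prod_of_pairwise_isCoprime (fun p hp q hq hpq ↦ ?_)
    fun p hp ↦ (hs p hp).squarefree
  simp only [← coprime_iff_isRelPrime]
  exact (coprime_primes (hs p hp) (hs q hq)).mpr hpq

lemma exists_subset_of_mul_eq_prod_primes {s : Finset ℕ} (hs : ∀ p ∈ s, p.Prime) {a b : ℕ}
    (h : a * b = ∏ p ∈ s, p) : ∃ t ⊆ s, a = ∏ p ∈ t, p ∧ b = ∏ p ∈ s \ t, p := by
  have hsq := squarefree_prod_of_forall_prime hs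
  have ha : Squarefree a := (h ▸ hsq).of_mul_left
  have hts : a.primeFactors ⊆ s :=
    primeFactors_prod hs ▸ primeFactors_mono (Dvd.intro b h) hsq.ne_zero
  refine ⟨a.primeFactors, hts, (prod_primeFactors_of_squarefree ha).symm, ?_⟩
  refine Nat.eq_of_mul_eq_mul_left (Nat.pos_of_ne_zero ha.ne_zero) ?_
  rw [h, ← Finset.prod_sdiff hts, prod_primeFactors_of_squarefree ha, mul_comm]

end Nat

lemma Set.ncard_le_two_mul_ncard_inter_setOf_fst_le_snd {α : Type*} [LinearOrder α]
    {S : Set (α × α)} (hS : S.Finite) (hswap : ∀ p ∈ S, p.swap ∈ S) :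
    S.ncard ≤ 2 * (S ∩ {p | p.1 ≤ p.2}).ncard := by
  set L := S ∩ {p | p.1 ≤ p.2}
  have hcover : S ⊆ L ∪ Prod.swap '' L := by
    intro p hp
    rcases le_total p.1 p.2 with hle | hle
    · exact Or.inl ⟨hp, hle⟩
    · exact Or.inr ⟨p.swap, ⟨hswap p hp, hle⟩, p.swap_swap⟩
  have hL : L.Finite := hS.inter_of_left _
  calc S.ncard ≤ (L ∪ Prod.swap '' L).ncard := Set.ncard_le_ncard hcover (hL.union (hL.image _))
    _ ≤ L.ncard + (Prod.swap '' L).ncard := Set.ncard_union_le _ _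
    _ ≤ 2 * L.ncard := by linarith [Set.ncard_image_le (f := Prod.swap) hL]

lemma centralBinom_le_two_mul_card_reps {A : Set ℕ} {s : Finset ℕ} {k : ℕ}
    (hs : ∀ p ∈ s, p.Prime) (hcard : s.card = 2 * k)
    (hA : ∀ t ⊆ s, t.card = k → ∏ p ∈ t, p ∈ A) :
    k.centralBinom ≤
      2 * Nat.card {p : ℕ × ℕ // p.1 ∈ A ∧ p.2 ∈ A ∧ p.1 ≤ p.2 ∧ p.1 * p.2 = ∏ p ∈ s, p} := by
  set n := ∏ p ∈ s, p
  set S : Set (ℕ × ℕ) := {p | p.1 ∈ A ∧ p.2 ∈ A ∧ p.1 * p.2 = n}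
  have hn : n ≠ 0 := (Nat.squarefree_prod_of_forall_prime hs).ne_zero
  have hSfin : S.Finite := n.divisorsAntidiagonal.finite_toSet.subset fun p hp ↦ by
    simpa [Nat.mem_divisorsAntidiagonal, hn] using hp.2.2
  have hreps : S ∩ {p | p.1 ≤ p.2} =
      {p : ℕ × ℕ | p.1 ∈ A ∧ p.2 ∈ A ∧ p.1 ≤ p.2 ∧ p.1 * p.2 = n} := by
    ext p; simp only [S, Set.mem_inter_iff, Set.mem_ofPred_eq]; tauto
  let split : Finset ℕ → ℕ × ℕ := fun t ↦ (∏ p ∈ t, p, ∏ p ∈ s \ t, p)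
  have hsplit_inj : Set.InjOn split ↑(s.powersetCard k) := fun t ht u hu htu ↦ by
    have hprime : ∀ v ∈ s.powersetCard k, ∀ p ∈ v, p.Prime := fun v hv p hp ↦
      hs p ((Finset.mem_powersetCard.1 hv).1 hp)
    rw [← Nat.primeFactors_prod (hprime t ht), ← Nat.primeFactors_prod (hprime u hu)]
    exact congrArg (fun p : ℕ × ℕ ↦ p.1.primeFactors) htu
  have hsplit_mem : ∀ t ∈ s.powersetCard k, split t ∈ S := fun t ht ↦ by
    obtain ⟨hts, htk⟩ := Finset.mem_powersetCard.1 ht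
    refine ⟨hA t hts htk, hA _ Finset.sdiff_subset ?_, ?_⟩
    · rw [Finset.card_sdiff_of_subset hts, hcard, htk]; omega
    · rw [mul_comm]; exact Finset.prod_sdiff hts
  calc k.centralBinom = ((s.powersetCard k).image split).card := by
        rw [Finset.card_image_of_injOn hsplit_inj, Finset.card_powersetCard, hcard,
          Nat.centralBinom_eq_two_mul_choose]
    _ ≤ S.ncard := by
        rw [← Set.ncard_coe_finset]
        refine Set.ncard_le_ncard (fun x hx ↦ ?_) hSfin
        obtain ⟨t, ht, rfl⟩ := Finset.mem_image.1 hx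
        exact hsplit_mem t ht
    _ ≤ 2 * (S ∩ {p | p.1 ≤ p.2}).ncard :=
        Set.ncard_le_two_mul_ncard_inter_setOf_fst_le_snd hSfin fun p hp ↦
          ⟨hp.2.1, hp.1, by rw [Prod.fst_swap, Prod.snd_swap, mul_comm]; exact hp.2.2⟩
    _ = _ := by rw [hreps]; rfl

lemma exists_subset_prod_mem_of_card_reps_pos {A : Set ℕ} {s : Finset ℕ}
    (hs : ∀ p ∈ s, p.Prime)
    (h : 0 < Nat.card {p : ℕ × ℕ // p.1 ∈ A ∧ p.2 ∈ A ∧ p.1 ≤ p.2 ∧ p.1 * p.2 = ∏ p ∈ s, p}) :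
    ∃ t ⊆ s, ∏ p ∈ t, p ∈ A ∧ ∏ p ∈ s \ t, p ∈ A := by
  obtain ⟨⟨⟨a, b⟩, ha, hb, -, hab⟩⟩ := (Nat.card_pos_iff.1 h).1
  obtain ⟨t, hts, rfl, rfl⟩ := Nat.exists_subset_of_mul_eq_prod_primes hs hab
  exact ⟨t, hts, ha, hb⟩

lemma Nat.lt_prod_of_mem_of_lt {s : Finset ℕ} (hs : ∀ p ∈ s, p.Prime) {p N : ℕ} (hp : p ∈ s)
    (hN : N < p) : N < ∏ q ∈ s, q :=
  hN.trans_le (Nat.le_of_dvd (Finset.prod_pos fun q hq ↦ (hs q hq).pos)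
    (Finset.dvd_prod_of_mem _ hp))

theorem erdos_multiplicative_erdos_turan_general (A : Set ℕ)
    (g : ℕ → ℕ)
    (hg : ∀ n : ℕ, g n =
      Nat.card {p : ℕ × ℕ // p.1 ∈ A ∧ p.2 ∈ A ∧ p.1 ≤ p.2 ∧ p.1 * p.2 = n})
    (n₀ : ℕ) (hpos : ∀ n : ℕ, n > n₀ → 1 ≤ g n) :
    ∀ m : ℕ, ∃ᶠ n : ℕ in atTop, m ≤ g n := by
  intro m
  set P : Set ℕ := {p | p.Prime ∧ n₀ < p}
  have hP : P.Infinite :=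
    (Nat.infinite_setOfPred_prime.sdiff (Set.finite_Iic n₀)).mono fun p hp ↦ ⟨hp.1, not_le.1 hp.2⟩
  have hsplit (s : Finset ℕ) (hsP : ↑s ⊆ P) (hs : s.Nonempty) :
      ∃ t ⊆ s, ∏ p ∈ t, p ∈ A ∧ ∏ p ∈ s \ t, p ∈ A := by
    have hprime : ∀ p ∈ s, p.Prime := fun p hp ↦ (hsP hp).1
    obtain ⟨p, hp⟩ := hs
    exact exists_subset_prod_mem_of_card_reps_pos hprime
      (hg _ ▸ hpos _ (Nat.lt_prod_of_mem_of_lt hprime hp (hsP hp).2))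
  obtain ⟨k, hmk, R, hRP, hR, hRA⟩ :=
    exists_infinite_forall_card_eq_of_forall_exists_split _ hP hsplit m
  refine frequently_atTop.2 fun N ↦ ?_
  obtain ⟨s, hsR, hsk⟩ := (hR.sdiff (Set.finite_Iic N)).exists_subset_card_eq (2 * k)
  have hprime : ∀ p ∈ s, p.Prime := fun p hp ↦ (hRP (hsR hp).1).1
  obtain ⟨p, hp⟩ := Finset.card_pos.1 (by omega : 0 < s.card)
  refine ⟨∏ p ∈ s, p, (Nat.lt_prod_of_mem_of_lt hprime hp (not_le.1 (hsR hp).2)).le, ?_⟩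
  have hcount : k.centralBinom ≤ 2 * g (∏ p ∈ s, p) :=
    hg _ ▸ centralBinom_le_two_mul_card_reps hprime hsk fun t hts htk ↦
      hRA t (fun x hx ↦ (hsR (hts hx)).1) htk
  have hk : 2 * k ≤ k.centralBinom := by simpa using Nat.choose_le_centralBinom 1 k
  omega

theorem erdos_multiplicative_erdos_turan (A : Set ℕ)
    (hA : ∀ a ∈ A, 0 < a) (g : ℕ → ℕ)
    (hg : ∀ n : ℕ, g n =
      Nat.card {p : ℕ × ℕ // p.1 ∈ A ∧ p.2 ∈ A ∧ p.1 ≤ p.2 ∧ p.1 * p.2 = n})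
    (n₀ : ℕ) (hpos : ∀ n : ℕ, n > n₀ → 1 ≤ g n) :
    ∀ m : ℕ, ∃ᶠ n : ℕ in atTop, m ≤ g n :=
  erdos_multiplicative_erdos_turan_general A g hg n₀ hpos
end

section
/- (Raikov, Stöhr) For every integer h ≥ 2 there exists a thin additive basis of order h: a set A of nonnegative integers that is an additive basis of order h together with a constant C > 0 such that the counting function satisfies A(x) ≤ C·x^{1/h} for all x ≥ 1. -/
/-!
Split the binary digits of `n` according to their position modulo `h`: the digits in positions
`≡ i (mod h)` form a number `2^i * s`, where `s` has nonzero binary digits only in positions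
divisible by `h`. Hence the numbers `2^i * s` with `i < h` form a basis of order `h`. Such an `s`
is `spreadBits h m` for the number `m` read off its digits in positions `0, h, 2h, …`, and
`m ^ h ≤ 2 ^ h * s`, so at most `2 x^(1/h)` values of `m` give `2^i * s ≤ x` for each `i`.
-/

open Pointwise Filter

/-- The binary digit of `spreadBits h m` in position `h * k` is the `k`-th binary digit of `m`;
all its other binary digits vanish. -/
def spreadBits (h m : ℕ) : ℕ := Nat.ofDigits (2 ^ h) (Nat.digits 2 m)

@[simp] lemma spreadBits_zero (h : ℕ) : spreadBits h 0 = 0 := by simp [spreadBits]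

lemma spreadBits_add_two_mul {b : ℕ} (hb : b < 2) (h m : ℕ) :
    spreadBits h (b + 2 * m) = b + 2 ^ h * spreadBits h m := by
  rcases Nat.eq_zero_or_pos (b + 2 * m) with hbm | hbm
  · obtain ⟨rfl, rfl⟩ : b = 0 ∧ m = 0 := by omega
    simp
  · rw [spreadBits, Nat.digits_def' one_lt_two hbm, Nat.ofDigits_cons, spreadBits,
      show (b + 2 * m) % 2 = b by omega, show (b + 2 * m) / 2 = m by omega]

lemma spreadBits_eq (h m : ℕ) : spreadBits h m = m % 2 + 2 ^ h * spreadBits h (m / 2) := by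
  rw [← spreadBits_add_two_mul (Nat.mod_lt m two_pos), Nat.mod_add_div]

lemma two_pow_mul_log_le_spreadBits (h : ℕ) {m : ℕ} (hm : m ≠ 0) :
    2 ^ (h * Nat.log 2 m) ≤ spreadBits h m := by
  induction m using Nat.strong_induction_on with
  | _ m ih =>
    rw [spreadBits_eq]
    rcases lt_or_ge m 2 with hm2 | hm2
    · obtain rfl : m = 1 := by omega
      simp
    · have hlog : Nat.log 2 m = Nat.log 2 (m / 2) + 1 := by
        have := Nat.log_div_base 2 m
        have := Nat.log_pos one_lt_two hm2
        omega
      calc 2 ^ (h * Nat.log 2 m) = 2 ^ h * 2 ^ (h * Nat.log 2 (m / 2)) := by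
            rw [hlog, ← pow_add]; ring_nf
        _ ≤ 2 ^ h * spreadBits h (m / 2) := by gcongr; exact ih _ (by omega) (by omega)
        _ ≤ _ := Nat.le_add_left _ _

lemma pow_le_two_pow_mul_spreadBits (h : ℕ) {m : ℕ} (hm : m ≠ 0) :
    m ^ h ≤ 2 ^ h * spreadBits h m :=
  calc m ^ h ≤ (2 ^ (Nat.log 2 m + 1)) ^ h := by
        gcongr; exact (Nat.lt_pow_succ_log_self one_lt_two m).le
    _ = 2 ^ h * 2 ^ (h * Nat.log 2 m) := by rw [← pow_mul, ← pow_add]; ring_nf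
    _ ≤ 2 ^ h * spreadBits h m := by gcongr; exact two_pow_mul_log_le_spreadBits h hm

lemma exists_sum_two_pow_mul_spreadBits (h : ℕ) (hh : h ≠ 0) (n : ℕ) :
    ∃ m : Fin h → ℕ, ∑ i : Fin h, 2 ^ (i : ℕ) * spreadBits h (m i) = n := by
  obtain ⟨k, rfl⟩ := Nat.exists_eq_succ_of_ne_zero hh
  induction n using Nat.strong_induction_on with
  | _ n ih =>
    rcases Nat.eq_zero_or_pos n with rfl | hn
    · exact ⟨0, by simp⟩
    obtain ⟨m, hm⟩ := ih (n / 2) (by omega)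
    -- Doubling moves the class-`i` part of `n / 2` to class `i + 1`; the class-`k` part moves to
    -- class `0`, above the new last digit `n % 2`.
    refine ⟨Fin.cons (n % 2 + 2 * m (Fin.last k)) (fun i => m i.castSucc), ?_⟩
    rw [Fin.sum_univ_castSucc] at hm
    rw [Fin.sum_univ_succ]
    simp only [Fin.cons_zero, Fin.cons_succ, Fin.val_zero, Fin.val_succ, Fin.val_castSucc,
      Fin.val_last, spreadBits_add_two_mul (Nat.mod_lt n two_pos)] at hm ⊢
    simp only [pow_zero, one_mul, Nat.pow_succ', mul_assoc, ← Finset.mul_sum]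
    omega

def thinBasis (h : ℕ) : Set ℕ :=
  Set.image2 (fun i m => 2 ^ i * spreadBits h m) (Set.Iio h) Set.univ

lemma isBasisOfOrder_thinBasis (h : ℕ) (hh : h ≠ 0) : IsBasisOfOrder (thinBasis h) h := by
  intro n
  obtain ⟨m, hm⟩ := exists_sum_two_pow_mul_spreadBits h hh n
  exact ⟨fun i => 2 ^ (i : ℕ) * spreadBits h (m i), fun i => ⟨i, i.isLt, m i, trivial, rfl⟩, hm⟩

lemma countingFn_thinBasis_le (h x B : ℕ) (hB : ∀ m, m ^ h ≤ 2 ^ h * x → m ≤ B) :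
    countingFn (thinBasis h) x ≤ h * B := by
  have hsub : thinBasis h ∩ Set.Icc 1 x ⊆
      Finset.image₂ (fun i m => 2 ^ i * spreadBits h m) (Finset.range h) (Finset.Icc 1 B) := by
    rintro _ ⟨⟨i, hi, m, -, rfl⟩, hpos, hx⟩
    have hm : m ≠ 0 := by rintro rfl; simp at hpos
    have hsx : spreadBits h m ≤ x := le_trans (Nat.le_mul_of_pos_left _ (by positivity)) hx
    have hmB := hB m ((pow_le_two_pow_mul_spreadBits h hm).trans (by gcongr))
    simp only [Finset.coe_image₂, Finset.coe_range, Finset.coe_Icc]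
    exact Set.mem_image2_of_mem hi ⟨Nat.one_le_iff_ne_zero.2 hm, hmB⟩
  calc countingFn (thinBasis h) x ≤ _ := Set.ncard_le_ncard hsub (Finset.finite_toSet _)
    _ ≤ (Finset.range h).card * (Finset.Icc 1 B).card := by
        rw [Set.ncard_coe_finset]; exact Finset.card_image₂_le _ _ _
    _ = h * B := by simp

lemma le_two_mul_rpow_of_pow_le {h : ℕ} (hh : h ≠ 0) {m x : ℝ} (hm : 0 ≤ m) (hx : 0 ≤ x)
    (hmx : m ^ h ≤ 2 ^ h * x) : m ≤ 2 * x ^ ((1 : ℝ) / h) := by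
  have : m / 2 ≤ x ^ ((h : ℝ)⁻¹) := by
    rw [Real.le_rpow_inv_iff_of_pos (by positivity) hx (by positivity), Real.rpow_natCast,
      div_pow, div_le_iff₀ (by positivity)]
    linarith
  rw [one_div]; linarith

theorem exists_thin_basis (h : ℕ) (hh : 2 ≤ h) :
    ∃ (A : Set ℕ) (C : ℝ), IsBasisOfOrder A h ∧ 0 < C ∧
      ∀ x : ℕ, 1 ≤ x → (countingFn A x : ℝ) ≤ C * (x : ℝ) ^ ((1 : ℝ) / h) := by
  have hh0 : h ≠ 0 := by omega
  refine ⟨thinBasis h, 2 * h, isBasisOfOrder_thinBasis h hh0, by positivity, fun x _ => ?_⟩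
  set r : ℝ := 2 * (x : ℝ) ^ ((1 : ℝ) / h)
  have hB := countingFn_thinBasis_le h x ⌊r⌋₊ fun m hm => Nat.le_floor <|
    le_two_mul_rpow_of_pow_le hh0 m.cast_nonneg x.cast_nonneg (by exact_mod_cast hm)
  calc (countingFn (thinBasis h) x : ℝ) ≤ h * ⌊r⌋₊ := by exact_mod_cast hB
    _ ≤ h * r := by gcongr; exact Nat.floor_le (by positivity)
    _ = 2 * h * (x : ℝ) ^ ((1 : ℝ) / h) := by ring
end

section
/- (Erdős–Nathanson) Let A be a set of nonnegative integers and for each nonnegative integer n let f(n) be the number of representations of n as a sum n = a + a' with a, a' ∈ A and a ≤ a'. If there exists a constant c > 1/log(4/3) such that f(n) > c·log n for all sufficiently large n, then A contains a subset that is a minimal asymptotic basis of order 2. -/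
open Pointwise Filter

/-!
Following Erdős and Nathanson, `B` is obtained from `A` by deleting elements in infinitely many
finite steps. A step picks `n = b + a` with `a ∈ A` large and deletes one summand of every other
representation of `n`, so that `b + (n - b)` becomes the only one; where no earlier commitment
forces the choice, the deleted summand is chosen by a coin flip. A 2-CNF counting argument shows
that an integer `m` with `c₂ log m` representations untouched by the forced deletions loses all
of them with probability at most `(3/4) ^ (c₂ log m) = m ^ (-c₂ log (4/3))`. Since
`c₂ log (4/3) > 1` these bounds are summable, so some choice keeps every `m` in a long range
represented. Nothing is ever deleted below the range already secured, and every surviving `b` is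
treated infinitely often, so the limit set is an asymptotic basis none of whose elements can be
removed.
-/

namespace ErdosNathanson

open Finset Real

open scoped Classical

/-- A representation `m = x + (m - x)` with `x ≤ m - x` is recorded by its smaller summand `x`. -/
noncomputable def reps (S : Set ℕ) (m : ℕ) : Finset ℕ :=
  (Iic (m / 2)).filter fun x => x ∈ S ∧ m - x ∈ S

theorem mem_reps {S : Set ℕ} {m x : ℕ} : x ∈ reps S m ↔ 2 * x ≤ m ∧ x ∈ S ∧ m - x ∈ S := by
  simp only [reps, mem_filter, mem_Iic]
  constructor <;> rintro ⟨h, hS⟩ <;> exact ⟨by omega, hS⟩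

theorem min_mem_reps {S : Set ℕ} {x y : ℕ} (hx : x ∈ S) (hy : y ∈ S) :
    min x y ∈ reps S (x + y) := by
  rcases le_total x y with h | h
  · rw [min_eq_left h, mem_reps, Nat.add_sub_cancel_left]; exact ⟨by omega, hx, hy⟩
  · rw [min_eq_right h, mem_reps, Nat.add_sub_cancel]; exact ⟨by omega, hy, hx⟩

theorem reps_congr {S S' : Set ℕ} {m : ℕ} (h : ∀ z ≤ m, z ∈ S ↔ z ∈ S') :
    reps S m = reps S' m := by
  ext x
  simp only [mem_reps]
  constructor <;> rintro ⟨hx, h1, h2⟩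
  · exact ⟨hx, (h x (by omega)).1 h1, (h _ (by omega)).1 h2⟩
  · exact ⟨hx, (h x (by omega)).2 h1, (h _ (by omega)).2 h2⟩

theorem reps_sdiff (S : Set ℕ) (G : Finset ℕ) (m : ℕ) :
    reps (S \ ↑G) m = (reps S m).filter fun u => u ∉ G ∧ m - u ∉ G := by
  ext x
  simp only [mem_reps, mem_filter, Set.mem_sdiff, mem_coe]
  tauto

theorem reps_sdiff_of_lt {S : Set ℕ} {G : Finset ℕ} {m : ℕ} (hG : ∀ z ∈ G, m < z) :
    reps (S \ ↑G) m = reps S m :=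
  reps_congr fun z hz => ⟨fun h => h.1, fun h => ⟨h, fun hzG => by have := hG z hzG; omega⟩⟩

/-- A representation destroyed by deleting `G` is `min z (m - z)` for a summand `z ∈ G`. -/
theorem card_reps_le_card_reps_sdiff_add_card (S : Set ℕ) (G : Finset ℕ) (m : ℕ) :
    (reps S m).card ≤ (reps (S \ ↑G) m).card + G.card := by
  have hsub : reps S m ⊆ reps (S \ ↑G) m ∪ G.image fun z => min z (m - z) := by
    intro u hu
    rw [reps_sdiff, mem_union, mem_filter, mem_image]
    have h2u := (mem_reps.1 hu).1
    by_contra! h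
    by_cases huG : u ∈ G
    · exact h.2 u huG (by omega)
    · exact h.2 (m - u) (h.1 hu huG) (by omega)
  calc (reps S m).card ≤ (reps (S \ ↑G) m ∪ G.image fun z => min z (m - z)).card :=
        card_le_card hsub
    _ ≤ _ := (card_union_le _ _).trans (Nat.add_le_add_left card_image_le _)

theorem isAsymptoticBasisOfOrder_two_of_reps_nonempty {B : Set ℕ}
    (h : ∀ᶠ m in atTop, (reps B m).Nonempty) : IsAsymptoticBasisOfOrder B 2 := by
  refine h.mono fun m ⟨x, hx⟩ => ?_
  obtain ⟨h2x, hxB, hmxB⟩ := mem_reps.1 hx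
  refine ⟨![x, m - x], fun i => ?_, ?_⟩
  · fin_cases i
    exacts [hxB, hmxB]
  · simp only [Fin.sum_univ_two, Matrix.cons_val_zero, Matrix.cons_val_one]
    omega

theorem isMinimalAsymptoticBasisOfOrder_two {B : Set ℕ} (hB : IsAsymptoticBasisOfOrder B 2)
    (hunique : ∀ b ∈ B, ∃ᶠ n in atTop, reps B n = {b}) : IsMinimalAsymptoticBasisOfOrder B 2 := by
  refine ⟨hB, fun B' hB' hbasis => ?_⟩
  obtain ⟨b, hbB, hbB'⟩ := Set.exists_of_ssubset hB'
  obtain ⟨n, hn, x, hx, rfl⟩ := ((hunique b hbB).and_eventually hbasis).exists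
  rw [Fin.sum_univ_two] at hn
  have hmin := min_mem_reps (hB'.1 (hx 0)) (hB'.1 (hx 1))
  rw [hn, mem_singleton] at hmin
  rcases min_choice (x 0) (x 1) with h | h <;> rw [h] at hmin <;> exact hbB' (hmin ▸ hx _)

theorem natCard_eq_card_reps (A : Set ℕ) (m : ℕ) :
    Nat.card {p : ℕ × ℕ // p.1 ∈ A ∧ p.2 ∈ A ∧ p.1 ≤ p.2 ∧ p.1 + p.2 = m} = (reps A m).card := by
  have hset : {p : ℕ × ℕ | p.1 ∈ A ∧ p.2 ∈ A ∧ p.1 ≤ p.2 ∧ p.1 + p.2 = m} =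
      ↑((reps A m).image fun x => (x, m - x)) := by
    ext ⟨x, y⟩
    simp only [Set.mem_ofPred_eq, coe_image, Set.mem_image, mem_coe, mem_reps, Prod.mk.injEq]
    constructor
    · rintro ⟨hx, hy, hxy, rfl⟩
      exact ⟨x, ⟨by omega, hx, by rwa [Nat.add_sub_cancel_left]⟩, rfl, by omega⟩
    · rintro ⟨x, ⟨h2x, hx, hmx⟩, rfl, rfl⟩
      exact ⟨hx, hmx, by omega, by omega⟩
  rw [← card_image_of_injective (reps A m) fun x y (h : (x, m - x) = (y, m - y)) =>
    (Prod.mk.inj h).1, ← Set.ncard_coe_finset, ← hset, ← Nat.card_coe_set_eq]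
  rfl

theorem mul_le_pred_mul_of_lt_of_le {x y q : ℕ} (hxy : x < y) (hyq : y ≤ q) :
    q * x ≤ (q - 1) * y := by
  obtain ⟨q, rfl⟩ : ∃ q', q = q' + 1 := ⟨q - 1, by omega⟩
  rw [Nat.add_sub_cancel]
  nlinarith

section Clauses

variable {α ι : Type*} [DecidableEq α]

/-- A truth assignment is the finset `T` of true variables; the literal `(a, β)` says that
`a` has the value `β`. -/
def LiteralHolds (T : Finset α) (l : α × Bool) : Prop := l.1 ∈ T ↔ l.2 = true

instance (T : Finset α) (l : α × Bool) : Decidable (LiteralHolds T l) :=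
  inferInstanceAs (Decidable (_ ↔ _))

theorem literalHolds_not {T : Finset α} {a : α} {β : Bool} :
    LiteralHolds T (a, !β) ↔ ¬ LiteralHolds T (a, β) := by
  cases β <;> simp [LiteralHolds]

def models (C : Finset α) (F : Finset ι) (cl : ι → Finset (α × Bool)) :
    Finset (Finset α) :=
  C.powerset.filter fun T => ∀ i ∈ F, ∃ l ∈ cl i, LiteralHolds T l

theorem models_insert_subset [DecidableEq ι] (C : Finset α) (F : Finset ι)
    (cl : ι → Finset (α × Bool)) (i : ι) : models C (insert i F) cl ⊆ models C F cl :=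
  fun _ hT => mem_filter.2
    ⟨(mem_filter.1 hT).1, fun j hj => (mem_filter.1 hT).2 j (mem_insert_of_mem hj)⟩

def falsify (T : Finset α) (K : Finset (α × Bool)) : Finset α :=
  T \ K.image Prod.fst ∪ (K.filter fun l => l.2 = false).image Prod.fst

theorem falsify_sdiff (T : Finset α) (K : Finset (α × Bool)) :
    falsify T K \ K.image Prod.fst = T \ K.image Prod.fst := by
  ext a
  simp only [falsify, Finset.mem_sdiff, mem_union, mem_image]
  grind

theorem not_literalHolds_falsify {T : Finset α} {K : Finset (α × Bool)}
    (hK : Set.InjOn Prod.fst (K : Set (α × Bool))) {l : α × Bool} (hl : l ∈ K) :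
    ¬ LiteralHolds (falsify T K) l := by
  obtain ⟨a, β⟩ := l
  have hmem : a ∈ falsify T K ↔ (a, false) ∈ K := by
    simp only [falsify, mem_union, Finset.mem_sdiff, mem_image, mem_filter]
    constructor
    · rintro (⟨-, hnot⟩ | ⟨l', ⟨hl', hl'2⟩, rfl⟩)
      · exact absurd ⟨(a, β), hl, rfl⟩ hnot
      · rwa [← hl'2]
    · exact fun h => Or.inr ⟨_, ⟨h, rfl⟩, rfl⟩
  cases β
  · simp [LiteralHolds, hmem, hl]
  · have : (a, false) ∉ K := fun h => by simpa using hK h hl rfl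
    simp [LiteralHolds, hmem, this]

/-- Literals outside `K` whose variable occurs in `K` are complementary to a literal of `K`,
so falsifying `K` can only make them true. -/
theorem literalHolds_falsify {T : Finset α} {K : Finset (α × Bool)}
    (hK : Set.InjOn Prod.fst (K : Set (α × Bool))) {l : α × Bool} (hlK : l ∉ K)
    (hl : LiteralHolds T l) : LiteralHolds (falsify T K) l := by
  obtain ⟨a, β⟩ := l
  by_cases ha : a ∈ K.image Prod.fst
  · obtain ⟨⟨a', β'⟩, hl', rfl⟩ := mem_image.1 ha
    have hβ : β' = !β := by
      cases β <;> cases β' <;> simp_all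
    rw [← Bool.not_not β, literalHolds_not, ← hβ]
    exact not_literalHolds_falsify hK hl'
  · have : a ∈ falsify T K ↔ a ∈ T := by
      simp only [falsify, mem_union, Finset.mem_sdiff, ha, not_false_eq_true, and_true]
      exact or_iff_left fun h => ha (image_subset_image (filter_subset _ _) h)
    simpa only [LiteralHolds, this] using hl

theorem card_filter_sdiff_eq_le (s : Finset (Finset α)) (V t : Finset α) :
    (s.filter fun T => T \ V = t).card ≤ 2 ^ V.card := by
  rw [← card_powerset]
  refine card_le_card_of_injOn (· ∩ V) (fun T _ => mem_powerset.2 inter_subset_right) ?_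
  intro T hT T' hT' h
  rw [← sdiff_union_inter T V, ← sdiff_union_inter T' V, (mem_filter.1 hT).2,
    (mem_filter.1 hT').2]
  exact congrArg _ h

/-- On every fibre of `T ↦ T \ vars (cl i)`, which has at most `2 ^ k` elements, the falsified
assignment is a model of the old clauses but not of the new one. -/
theorem pow_mul_card_models_insert_le [DecidableEq ι] {C : Finset α} {F : Finset ι}
    {cl : ι → Finset (α × Bool)} {i : ι} {k : ℕ}
    (hvar : ∀ l ∈ cl i, l.1 ∈ C) (hinj : Set.InjOn Prod.fst (cl i : Set (α × Bool)))
    (hk : (cl i).card ≤ k) (hdisj : ∀ j ∈ F, Disjoint (cl i) (cl j)) :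
    2 ^ k * (models C (insert i F) cl).card ≤ (2 ^ k - 1) * (models C F cl).card := by
  set V := (cl i).image Prod.fst
  have hmaps : ∀ F' : Finset ι, Set.MapsTo (· \ V) (models C F' cl : Set (Finset α))
      (C.powerset : Set (Finset α)) := fun F' T hT =>
    mem_powerset.2 (sdiff_subset.trans (mem_powerset.1 (mem_filter.1 hT).1))
  rw [card_eq_sum_card_fiberwise (hmaps _), card_eq_sum_card_fiberwise (hmaps F), mul_sum,
    mul_sum]
  refine sum_le_sum fun t _ => ?_
  set X := (models C (insert i F) cl).filter fun T => T \ V = t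
  set Y := (models C F cl).filter fun T => T \ V = t
  rcases X.eq_empty_or_nonempty with hX | ⟨T, hT⟩
  · simp [hX]
  refine mul_le_pred_mul_of_lt_of_le (card_lt_card ?_) ((card_filter_sdiff_eq_le _ V t).trans ?_)
  · obtain ⟨hTmod, hTt⟩ := mem_filter.1 hT
    obtain ⟨hTC, hTcl⟩ := mem_filter.1 hTmod
    have hfC : falsify T (cl i) ⊆ C := by
      intro a ha
      simp only [falsify, mem_union, Finset.mem_sdiff, mem_image, mem_filter] at ha
      rcases ha with ⟨ha, -⟩ | ⟨l, ⟨hl, -⟩, rfl⟩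
      exacts [mem_powerset.1 hTC ha, hvar l hl]
    refine ssubset_iff_of_subset (monotone_filter_left _ (models_insert_subset C F cl i))
      |>.2 ⟨falsify T (cl i), mem_filter.2 ⟨mem_filter.2 ⟨mem_powerset.2 hfC, ?_⟩, ?_⟩, ?_⟩
    · intro j hj
      obtain ⟨l, hl, hlT⟩ := hTcl j (mem_insert_of_mem hj)
      exact ⟨l, hl, literalHolds_falsify hinj (disjoint_right.1 (hdisj j hj) hl) hlT⟩
    · rw [falsify_sdiff, hTt]
    · intro hmem
      obtain ⟨l, hl, hlT⟩ := (mem_filter.1 (mem_filter.1 hmem).1).2 i (mem_insert_self i F)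
      exact not_literalHolds_falsify hinj hl hlT
  · exact Nat.pow_le_pow_right two_pos (card_image_le.trans hk)

/-- A uniformly random assignment satisfies all the clauses with probability at most
`(1 - 2⁻ᵏ) ^ |F|`, as if they were independent. -/
theorem card_models_mul_pow_le (C : Finset α) (F : Finset ι) (cl : ι → Finset (α × Bool))
    {k : ℕ} (hvar : ∀ i ∈ F, ∀ l ∈ cl i, l.1 ∈ C)
    (hinj : ∀ i ∈ F, Set.InjOn Prod.fst (cl i : Set (α × Bool)))
    (hk : ∀ i ∈ F, (cl i).card ≤ k) (hdisj : (F : Set ι).PairwiseDisjoint cl) :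
    (models C F cl).card * (2 ^ k) ^ F.card ≤ 2 ^ C.card * (2 ^ k - 1) ^ F.card := by
  classical
  induction F using Finset.induction_on with
  | empty =>
    simp only [card_empty, pow_zero, mul_one]
    exact (card_filter_le _ _).trans (card_powerset C).le
  | @insert i F hi ih =>
    have hstep := pow_mul_card_models_insert_le (hvar i (mem_insert_self i F))
      (hinj i (mem_insert_self i F)) (hk i (mem_insert_self i F))
      fun j hj => hdisj (mem_insert_self i F) (mem_insert_of_mem hj)
        (ne_of_mem_of_not_mem hj hi).symm
    have ih := ih (fun j hj => hvar j (mem_insert_of_mem hj))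
      (fun j hj => hinj j (mem_insert_of_mem hj)) (fun j hj => hk j (mem_insert_of_mem hj))
      (hdisj.subset (by simp))
    rw [card_insert_of_notMem hi, pow_succ, pow_succ]
    calc (models C (insert i F) cl).card * ((2 ^ k) ^ F.card * 2 ^ k)
        = 2 ^ k * (models C (insert i F) cl).card * (2 ^ k) ^ F.card := by ring
      _ ≤ (2 ^ k - 1) * (models C F cl).card * (2 ^ k) ^ F.card := by gcongr
      _ ≤ (2 ^ k - 1) * (2 ^ C.card * (2 ^ k - 1) ^ F.card) := by
        rw [mul_assoc]; gcongr
      _ = 2 ^ C.card * ((2 ^ k - 1) ^ F.card * (2 ^ k - 1)) := by ring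

end Clauses

section PairDeletion

variable {C : Finset ℕ} {n : ℕ}

def pairDeletion (C : Finset ℕ) (n : ℕ) (T : Finset ℕ) : Finset ℕ :=
  T ∪ (C \ T).image (n - ·)

theorem card_pairDeletion_le {T : Finset ℕ} (hT : T ⊆ C) (n : ℕ) :
    (pairDeletion C n T).card ≤ C.card :=
  calc (pairDeletion C n T).card ≤ T.card + (C \ T).card :=
        (card_union_le _ _).trans (Nat.add_le_add_left card_image_le _)
    _ = C.card := by rw [add_comm, card_sdiff_add_card_eq_card hT]

/-- The literal under which `pairDeletion C n T` deletes `z`. -/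
def deletionLit (C : Finset ℕ) (n z : ℕ) : Option (ℕ × Bool) :=
  if z ∈ C then some (z, true) else if z ≤ n ∧ n - z ∈ C then some (n - z, false) else none

theorem deletionLit_eq_some (hC : ∀ x ∈ C, 2 * x < n) {z a : ℕ} {β : Bool} :
    deletionLit C n z = some (a, β) ↔ a ∈ C ∧ (β = true ∧ z = a ∨ β = false ∧ z + a = n) := by
  unfold deletionLit
  split_ifs with hz hz'
  · simp only [Option.some.injEq, Prod.mk.injEq]
    constructor
    · rintro ⟨rfl, rfl⟩; exact ⟨hz, Or.inl ⟨rfl, rfl⟩⟩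
    · rintro ⟨ha, ⟨rfl, rfl⟩ | ⟨rfl, h⟩⟩
      · exact ⟨rfl, rfl⟩
      · have := hC z hz; have := hC a ha; omega
  · simp only [Option.some.injEq, Prod.mk.injEq]
    constructor
    · rintro ⟨rfl, rfl⟩; exact ⟨hz'.2, Or.inr ⟨rfl, by omega⟩⟩
    · rintro ⟨ha, ⟨rfl, rfl⟩ | ⟨rfl, h⟩⟩
      · exact absurd ha hz
      · exact ⟨by omega, rfl⟩
  · simp only [false_iff, not_and, not_or]
    refine fun ha => ⟨fun _ h => hz (h ▸ ha), fun _ h => hz' ⟨by omega, ?_⟩⟩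
    rwa [show n - z = a by omega]

theorem card_toFinset_le_one {β : Type*} (o : Option β) : o.toFinset.card ≤ 1 := by
  cases o <;> simp

theorem mem_pairDeletion_iff (hC : ∀ x ∈ C, 2 * x < n) {T : Finset ℕ} (hT : T ⊆ C) {z : ℕ} :
    z ∈ pairDeletion C n T ↔ ∃ l ∈ deletionLit C n z, LiteralHolds T l := by
  simp only [pairDeletion, Option.mem_def, Prod.exists, deletionLit_eq_some hC, LiteralHolds,
    mem_union, mem_image, Finset.mem_sdiff]
  constructor
  · rintro (hz | ⟨x, ⟨hx, hxT⟩, rfl⟩)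
    · exact ⟨z, true, ⟨hT hz, Or.inl ⟨rfl, rfl⟩⟩, by simpa using hz⟩
    · exact ⟨x, false, ⟨hx, Or.inr ⟨rfl, by have := hC x hx; omega⟩⟩, by simpa using hxT⟩
  · rintro ⟨a, β, ⟨ha, ⟨rfl, rfl⟩ | ⟨rfl, hza⟩⟩, hβ⟩
    · exact Or.inl (by simpa using hβ)
    · exact Or.inr ⟨a, ⟨ha, by simpa using hβ⟩, by omega⟩

def deletionClause (C : Finset ℕ) (n m u : ℕ) : Finset (ℕ × Bool) :=
  (deletionLit C n u).toFinset ∪ (deletionLit C n (m - u)).toFinset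

theorem mem_deletionClause {m u : ℕ} {l : ℕ × Bool} :
    l ∈ deletionClause C n m u ↔ ∃ z, (z = u ∨ z = m - u) ∧ deletionLit C n z = some l := by
  simp only [deletionClause, mem_union, Option.mem_toFinset, Option.mem_def]
  constructor
  · rintro (h | h)
    exacts [⟨u, Or.inl rfl, h⟩, ⟨m - u, Or.inr rfl, h⟩]
  · rintro ⟨z, rfl | rfl, h⟩
    exacts [Or.inl h, Or.inr h]

theorem filter_reps_sdiff_pairDeletion_eq_empty (S : Set ℕ) (hC : ∀ x ∈ C, 2 * x < n) (m : ℕ) :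
    (C.powerset.filter fun T => reps (S \ ↑(pairDeletion C n T)) m = ∅) =
      models C (reps S m) (deletionClause C n m) := by
  refine filter_congr fun T hT => ?_
  rw [reps_sdiff, filter_eq_empty_iff]
  refine forall₂_congr fun u _ => ?_
  simp only [not_and, not_not, ← or_iff_not_imp_left, mem_pairDeletion_iff hC (mem_powerset.1 hT),
    mem_deletionClause]
  constructor
  · rintro (⟨l, hl, hlT⟩ | ⟨l, hl, hlT⟩)
    exacts [⟨l, ⟨u, Or.inl rfl, hl⟩, hlT⟩, ⟨l, ⟨m - u, Or.inr rfl, hl⟩, hlT⟩]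
  · rintro ⟨l, ⟨z, rfl | rfl, hl⟩, hlT⟩
    exacts [Or.inl ⟨l, hl, hlT⟩, Or.inr ⟨l, hl, hlT⟩]

/-- Complementary literals `(a, true)` and `(a, false)` delete `a` and `n - a`, which are the two
summands of a representation only if `m = n`. -/
theorem injOn_fst_deletionClause (hC : ∀ x ∈ C, 2 * x < n) {m u : ℕ} (hmn : m ≠ n)
    (hu : 2 * u ≤ m) : Set.InjOn Prod.fst (deletionClause C n m u : Set (ℕ × Bool)) := by
  rintro ⟨a, β⟩ hl ⟨a', β'⟩ hl' (rfl : a = a')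
  obtain ⟨z, hzu, hz⟩ := mem_deletionClause.1 hl
  obtain ⟨z', hzu', hz'⟩ := mem_deletionClause.1 hl'
  obtain ⟨ha, hz⟩ := (deletionLit_eq_some hC).1 hz
  obtain ⟨-, hz'⟩ := (deletionLit_eq_some hC).1 hz'
  have := hC a ha
  cases β <;> cases β' <;> simp only [Bool.false_eq_true, Bool.true_eq_false, false_and,
    true_and, false_or, or_false] at hz hz' <;> first | rfl | omega

theorem pairwiseDisjoint_deletionClause (S : Set ℕ) (hC : ∀ x ∈ C, 2 * x < n) (m : ℕ) :
    (reps S m : Set ℕ).PairwiseDisjoint (deletionClause C n m) := by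
  refine fun u hu w hw huw => disjoint_left.2 fun ⟨a, β⟩ hlu hlw => ?_
  have h2u := (mem_reps.1 hu).1
  have h2w := (mem_reps.1 hw).1
  obtain ⟨z, hzu, hz⟩ := mem_deletionClause.1 hlu
  obtain ⟨z', hzw, hz'⟩ := mem_deletionClause.1 hlw
  obtain ⟨-, hz⟩ := (deletionLit_eq_some hC).1 hz
  obtain ⟨-, hz'⟩ := (deletionLit_eq_some hC).1 hz'
  have : u ≠ w := huw
  cases β <;> simp only [Bool.false_eq_true, Bool.true_eq_false, false_and, true_and, false_or,
    or_false] at hz hz' <;> omega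

theorem card_filter_reps_sdiff_pairDeletion_eq_empty_mul_le (S : Set ℕ)
    (hC : ∀ x ∈ C, 2 * x < n) {m : ℕ} (hmn : m ≠ n) :
    (C.powerset.filter fun T => reps (S \ ↑(pairDeletion C n T)) m = ∅).card *
      4 ^ (reps S m).card ≤ 2 ^ C.card * 3 ^ (reps S m).card := by
  rw [filter_reps_sdiff_pairDeletion_eq_empty S hC]
  simpa using card_models_mul_pow_le C (reps S m) (deletionClause C n m) (k := 2)
    (fun u _ _ hl => by
      obtain ⟨z, -, hz⟩ := mem_deletionClause.1 hl
      exact ((deletionLit_eq_some hC).1 hz).1)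
    (fun u hu => injOn_fst_deletionClause hC hmn (mem_reps.1 hu).1)
    (fun u _ => (card_union_le _ _).trans (Nat.add_le_add (card_toFinset_le_one _)
      (card_toFinset_le_one _)))
    (pairwiseDisjoint_deletionClause S hC m)

theorem exists_reps_sdiff_pairDeletion_nonempty (S : Set ℕ) (hC : ∀ x ∈ C, 2 * x < n)
    (W : Finset ℕ) (hnW : n ∉ W) (hW : ∑ m ∈ W, (3 / 4 : ℝ) ^ (reps S m).card < 1) :
    ∃ T ⊆ C, ∀ m ∈ W, (reps (S \ ↑(pairDeletion C n T)) m).Nonempty := by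
  by_contra! h
  set bad : ℕ → Finset (Finset ℕ) := fun m =>
    C.powerset.filter fun T => reps (S \ ↑(pairDeletion C n T)) m = ∅
  have hcover : C.powerset ⊆ W.biUnion bad := fun T hT => by
    obtain ⟨m, hm, hempty⟩ := h T (mem_powerset.1 hT)
    exact mem_biUnion.2 ⟨m, hm, mem_filter.2 ⟨hT, hempty⟩⟩
  have hbad : ∀ m ∈ W, ((bad m).card : ℝ) ≤ 2 ^ C.card * (3 / 4) ^ (reps S m).card := by
    intro m hm
    rw [div_pow, mul_div_assoc', le_div_iff₀ (by positivity)]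
    exact_mod_cast card_filter_reps_sdiff_pairDeletion_eq_empty_mul_le S hC
      (ne_of_mem_of_not_mem hm hnW)
  have : (2 : ℝ) ^ C.card < 2 ^ C.card := calc
    (2 : ℝ) ^ C.card = C.powerset.card := by simp
    _ ≤ ∑ m ∈ W, ((bad m).card : ℝ) := by
      exact_mod_cast (card_le_card hcover).trans card_biUnion_le
    _ ≤ ∑ m ∈ W, 2 ^ C.card * (3 / 4 : ℝ) ^ (reps S m).card := sum_le_sum hbad
    _ < 2 ^ C.card := by
      rw [← mul_sum]
      exact mul_lt_of_lt_one_right (by positivity) hW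
  exact lt_irrefl _ this

end PairDeletion

section Isolation

variable {M n b : ℕ}

/-- To isolate the representation `b + (n - b)`, the partner `n - x` of every other small
summand `x ≤ M`, and the middle `n - n / 2`, are deleted outright. -/
def forcedDeletion (M n b : ℕ) : Finset ℕ :=
  ((insert (n / 2) (range (M + 1))).erase b).image (n - ·)

/-- The other representations `x + (n - x)` with `M < x < n / 2`, each of which loses one
summand, chosen later. -/
def coins (M n b : ℕ) : Finset ℕ := (Ioo M (n / 2)).erase b

theorem two_mul_lt_of_mem_coins {x : ℕ} (hx : x ∈ coins M n b) : 2 * x < n := by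
  simp only [coins, mem_erase, mem_Ioo] at hx
  omega

theorem card_forcedDeletion_le : (forcedDeletion M n b).card ≤ M + 2 :=
  card_image_le.trans <| card_erase_le.trans <| (card_insert_le _ _).trans (by simp)

theorem lt_of_mem_forcedDeletion (hn : 2 * (M + 1) ≤ n) {z : ℕ} (hz : z ∈ forcedDeletion M n b) :
    M < z ∧ n ≤ 2 * z := by
  simp only [forcedDeletion, mem_image, mem_erase, mem_insert, mem_range] at hz
  omega

theorem lt_of_mem_pairDeletion_coins (hn : 2 * (M + 1) ≤ n) {T : Finset ℕ}
    (hT : T ⊆ coins M n b) {z : ℕ} (hz : z ∈ pairDeletion (coins M n b) n T) : M < z := by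
  simp only [pairDeletion, mem_union, mem_image, Finset.mem_sdiff] at hz
  rcases hz with hz | ⟨x, ⟨hx, -⟩, rfl⟩
  · have := hT hz
    simp only [coins, mem_erase, mem_Ioo] at this
    omega
  · have := two_mul_lt_of_mem_coins hx
    omega

theorem reps_sdiff_forcedDeletion_sdiff_pairDeletion (hn : 2 * (M + 1) ≤ n) (hb : 2 * b < n)
    {S : Set ℕ} (hbS : b ∈ S) (hnbS : n - b ∈ S) {T : Finset ℕ} (hT : T ⊆ coins M n b) :
    reps ((S \ ↑(forcedDeletion M n b)) \ ↑(pairDeletion (coins M n b) n T)) n = {b} := by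
  have hcoin : ∀ y ∈ coins M n b, 2 * y < n := fun y hy => two_mul_lt_of_mem_coins hy
  rw [eq_singleton_iff_unique_mem]
  simp only [mem_reps, Set.mem_sdiff, mem_coe, forcedDeletion, pairDeletion, mem_union, mem_image,
    Finset.mem_sdiff, mem_erase, mem_insert, mem_range]
  constructor
  · refine ⟨hb.le, ⟨⟨hbS, ?_⟩, ?_⟩, ⟨hnbS, ?_⟩, ?_⟩
    · rintro ⟨y, ⟨-, hy⟩, hyb⟩
      omega
    · rintro (hbT | ⟨y, ⟨hy, -⟩, hyb⟩)
      · exact (mem_erase.1 (hT hbT)).1 rfl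
      · have := hcoin y hy
        omega
    · rintro ⟨y, ⟨hyb, hy⟩, hy'⟩
      omega
    · rintro (hbT | ⟨y, ⟨hy, -⟩, hyb⟩)
      · have := hcoin _ (hT hbT)
        omega
      · have := hcoin y hy
        have : y ≠ b := (mem_erase.1 hy).1
        omega
  · rintro x ⟨hx, ⟨⟨-, hxF⟩, hxP⟩, ⟨-, hnxF⟩, hnxP⟩
    by_contra hxb
    by_cases hxM : x ≤ M ∨ x = n / 2
    · exact hnxF ⟨x, ⟨hxb, by omega⟩, rfl⟩
    have hxC : x ∈ coins M n b := by simp only [coins, mem_erase, mem_Ioo]; omega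
    by_cases hxT : x ∈ T
    · exact hxP (Or.inl hxT)
    · exact hnxP (Or.inr ⟨x, ⟨hxC, hxT⟩, rfl⟩)

end Isolation

section Construction

variable {A : Set ℕ} {c c₁ c₂ : ℝ} {N₁ : ℕ}

/-- Of the `c log m` representations of `m`, up to `(c - c₁) log m` may be lost to earlier
deletions and up to `(c₁ - c₂) log m` to the forced deletions of the current step, which leaves
`c₂ log m` of them to the random choice; `sum_lt_one` is the union bound over all `m ≥ N₁`. -/
structure Setup (A : Set ℕ) (c c₁ c₂ : ℝ) (N₁ : ℕ) : Prop where
  one_le : 1 ≤ N₁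
  nonneg : 0 ≤ c₂
  lt₁₂ : c₂ < c₁
  lt₁ : c₁ < c
  lt_card_reps : ∀ m, N₁ ≤ m → c * log m < (reps A m).card
  sum_lt_one : ∀ W : Finset ℕ, (∀ m ∈ W, N₁ ≤ m) → ∑ m ∈ W, (3 / 4 : ℝ) ^ (c₂ * log m) < 1

/-- The elements of `D` are deleted from `A`, and nothing below `M` will be deleted later. -/
structure Stage (A : Set ℕ) (c c₁ : ℝ) (N₁ : ℕ) where
  D : Finset ℕ
  M : ℕ
  le_M : N₁ ≤ M
  card_D_le : (D.card : ℝ) ≤ (c - c₁) * log M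
  reps_nonempty : ∀ m, N₁ ≤ m → m ≤ M → (reps (A \ ↑D) m).Nonempty

instance : Preorder (Stage A c c₁ N₁) where
  le s t := s.D ⊆ t.D ∧ s.M ≤ t.M ∧ ∀ z ∈ t.D, z ≤ s.M → z ∈ s.D
  le_refl _ := ⟨subset_rfl, le_rfl, fun _ hz _ => hz⟩
  le_trans _ _ _ hst htu := ⟨hst.1.trans htu.1, hst.2.1.trans htu.2.1,
    fun z hz hzM => hst.2.2 z (htu.2.2 z hz (hzM.trans hst.2.1)) hzM⟩

theorem reps_setOf_forall_not_mem_eq {s : ℕ → Stage A c c₁ N₁} (hs : Monotone s) {k m : ℕ}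
    (hm : m ≤ (s k).M) : reps {x | x ∈ A ∧ ∀ j, x ∉ (s j).D} m = reps (A \ ↑(s k).D) m := by
  refine reps_congr fun z hz => ⟨fun h => ⟨h.1, h.2 k⟩, fun h => ⟨h.1, fun j hj => h.2 ?_⟩⟩
  rcases le_total j k with hjk | hkj
  · exact (hs hjk).1 hj
  · exact (hs hkj).2.2 z hj (hz.trans hm)

def Stage.extend (s : Stage A c c₁ N₁) (E : Finset ℕ) (M' : ℕ) (hE : ∀ z ∈ E, s.M < z)
    (hM' : s.M ≤ M') (hcard : ((s.D ∪ E).card : ℝ) ≤ (c - c₁) * log M')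
    (hreps : ∀ m, s.M < m → m ≤ M' → (reps (A \ ↑(s.D ∪ E)) m).Nonempty) :
    Stage A c c₁ N₁ where
  D := s.D ∪ E
  M := M'
  le_M := s.le_M.trans hM'
  card_D_le := hcard
  reps_nonempty m hm hmM' := by
    rcases le_or_gt m s.M with hmM | hmM
    · rw [coe_union, ← Set.sdiff_sdiff, reps_sdiff_of_lt fun z hz => hmM.trans_lt (hE z hz)]
      exact s.reps_nonempty m hm hmM
    · exact hreps m hmM hmM'

theorem Stage.le_extend (s : Stage A c c₁ N₁) (E : Finset ℕ) (M' : ℕ) (hE : ∀ z ∈ E, s.M < z)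
    (hM' : s.M ≤ M') (hcard : ((s.D ∪ E).card : ℝ) ≤ (c - c₁) * log M')
    (hreps : ∀ m, s.M < m → m ≤ M' → (reps (A \ ↑(s.D ∪ E)) m).Nonempty) :
    s ≤ s.extend E M' hE hM' hcard hreps :=
  ⟨subset_union_left, hM', fun z hz hzM =>
    (mem_union.1 hz).resolve_right fun h => (hE z h).not_ge hzM⟩

theorem exists_forall_le_mul_log {δ : ℝ} (hδ : 0 < δ) (x : ℝ) :
    ∃ K : ℕ, ∀ m ≥ K, x ≤ δ * log m :=
  eventually_atTop.1 <| ((tendsto_log_atTop.comp tendsto_natCast_atTop_atTop).const_mul_atTop hδ)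
    |>.eventually_ge_atTop x

namespace Setup

variable (h : Setup A c c₁ c₂ N₁)
include h

theorem reps_nonempty {m : ℕ} (hm : N₁ ≤ m) : (reps A m).Nonempty := by
  have hlog : 0 ≤ c * log m :=
    mul_nonneg (by linarith [h.nonneg, h.lt₁₂, h.lt₁]) (log_natCast_nonneg m)
  exact card_pos.1 (by exact_mod_cast hlog.trans_lt (h.lt_card_reps m hm))

theorem infinite : A.Infinite := by
  refine Set.infinite_of_forall_exists_gt fun a => ?_
  obtain ⟨x, hx⟩ := h.reps_nonempty (le_max_left N₁ (2 * a + 2))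
  obtain ⟨h2x, -, hxA⟩ := mem_reps.1 hx
  exact ⟨_, hxA, by omega⟩

def initialStage : Stage A c c₁ N₁ where
  D := ∅
  M := N₁
  le_M := le_rfl
  card_D_le := by
    simpa using mul_nonneg (sub_nonneg.2 h.lt₁.le) (log_natCast_nonneg N₁)
  reps_nonempty m hm _ := by simpa using h.reps_nonempty hm

theorem le_card_reps_sdiff_forcedDeletion (s : Stage A c c₁ N₁) {n b : ℕ}
    (hn : 2 * (s.M + 1) ≤ n) (hlog : ∀ m, n ≤ 2 * m → (s.M + 2 : ℝ) ≤ (c₁ - c₂) * log m)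
    {m : ℕ} (hm : s.M < m) :
    c₂ * log m ≤ (reps ((A \ ↑s.D) \ ↑(forcedDeletion s.M n b)) m).card := by
  have hmN : N₁ ≤ m := s.le_M.trans hm.le
  have hlog0 : 0 ≤ log m := log_natCast_nonneg m
  have hD : (s.D.card : ℝ) ≤ (c - c₁) * log m := s.card_D_le.trans <|
    mul_le_mul_of_nonneg_left (log_le_log (by exact_mod_cast h.one_le.trans s.le_M)
      (by exact_mod_cast hm.le)) (sub_nonneg.2 h.lt₁.le)
  have hA := h.lt_card_reps m hmN
  have hAD : ((reps A m).card : ℝ) ≤ (reps (A \ ↑s.D) m).card + s.D.card := by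
    exact_mod_cast card_reps_le_card_reps_sdiff_add_card A s.D m
  rcases lt_or_ge (2 * m) n with hmn | hmn
  · rw [reps_sdiff_of_lt fun z hz => by have := (lt_of_mem_forcedDeletion hn hz).2; omega]
    nlinarith [h.lt₁₂]
  · have hF : ((reps (A \ ↑s.D) m).card : ℝ) ≤
        (reps ((A \ ↑s.D) \ ↑(forcedDeletion s.M n b)) m).card + (forcedDeletion s.M n b).card := by
      exact_mod_cast card_reps_le_card_reps_sdiff_add_card _ _ m
    have hFcard : ((forcedDeletion s.M n b).card : ℝ) ≤ s.M + 2 := by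
      exact_mod_cast card_forcedDeletion_le
    linarith [hlog m hmn]

/-- Union bound: each `m > s.M` keeps `c₂ log m` representations after the forced deletions, so
loses all of them with probability at most `(3/4) ^ (c₂ log m)`; these sum to less than `1`. -/
theorem exists_pairDeletion_coins_reps_nonempty (s : Stage A c c₁ N₁) {n b : ℕ}
    (hn : 2 * (s.M + 1) ≤ n) (hlog : ∀ m, n ≤ 2 * m → (s.M + 2 : ℝ) ≤ (c₁ - c₂) * log m)
    (M' : ℕ) : ∃ T ⊆ coins s.M n b, ∀ m ∈ (Ioc s.M M').erase n,
      (reps (((A \ ↑s.D) \ ↑(forcedDeletion s.M n b)) \ ↑(pairDeletion (coins s.M n b) n T))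
        m).Nonempty := by
  refine exists_reps_sdiff_pairDeletion_nonempty _ (fun x hx => two_mul_lt_of_mem_coins hx) _
    (notMem_erase n _) (lt_of_le_of_lt (sum_le_sum fun m hm => ?_) (h.sum_lt_one _ fun m hm => ?_))
  · rw [← rpow_natCast]
    exact rpow_le_rpow_of_exponent_ge (by norm_num) (by norm_num)
      (h.le_card_reps_sdiff_forcedDeletion s hn hlog (mem_Ioc.1 (mem_of_mem_erase hm)).1)
  · exact s.le_M.trans (mem_Ioc.1 (mem_of_mem_erase hm)).1.le

theorem exists_isolating_extension_at (s : Stage A c c₁ N₁) {n b : ℕ} (hn : 2 * (s.M + 1) ≤ n)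
    (hb : 2 * b < n) (hlog : ∀ m, n ≤ 2 * m → (s.M + 2 : ℝ) ≤ (c₁ - c₂) * log m)
    (hbS : b ∈ A \ ↑s.D) (hnbS : n - b ∈ A \ ↑s.D) :
    ∃ t, s ≤ t ∧ n ≤ t.M ∧ reps (A \ ↑t.D) n = {b} := by
  set F := forcedDeletion s.M n b
  set C := coins s.M n b
  obtain ⟨K', hK'⟩ :=
    exists_forall_le_mul_log (sub_pos.2 h.lt₁) ((s.D.card + F.card + C.card : ℕ) : ℝ)
  set M' := max n K'
  obtain ⟨T, hTC, hT⟩ := h.exists_pairDeletion_coins_reps_nonempty s hn hlog M'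
  set E := F ∪ pairDeletion C n T
  have hE : ∀ z ∈ E, s.M < z := fun z hz => (mem_union.1 hz).elim
    (fun hz => (lt_of_mem_forcedDeletion hn hz).1) (lt_of_mem_pairDeletion_coins hn hTC)
  have hAE : A \ ↑(s.D ∪ E) = ((A \ ↑s.D) \ ↑F) \ ↑(pairDeletion C n T) := by
    simp only [E, coe_union, Set.sdiff_sdiff, Set.union_assoc]
  have hiso : reps (A \ ↑(s.D ∪ E)) n = {b} := by
    rw [hAE]
    exact reps_sdiff_forcedDeletion_sdiff_pairDeletion hn hb hbS hnbS hTC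
  have hcard : ((s.D ∪ E).card : ℝ) ≤ (c - c₁) * log M' := by
    refine le_trans ?_ (hK' M' (le_max_right _ _))
    have hEcard : E.card ≤ F.card + C.card :=
      (card_union_le _ _).trans (Nat.add_le_add_left (card_pairDeletion_le hTC n) _)
    exact_mod_cast (card_union_le _ _).trans (by omega)
  have hreps : ∀ m, s.M < m → m ≤ M' → (reps (A \ ↑(s.D ∪ E)) m).Nonempty := by
    intro m hMm hmM'
    rcases eq_or_ne m n with rfl | hmn
    · exact hiso ▸ singleton_nonempty b
    · rw [hAE]
      exact hT m (mem_erase.2 ⟨hmn, mem_Ioc.2 ⟨hMm, hmM'⟩⟩)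
  exact ⟨s.extend E M' hE (by omega) hcard hreps, s.le_extend E M' hE _ hcard hreps,
    le_max_left _ _, hiso⟩

theorem exists_isolating_extension (s : Stage A c c₁ N₁) {b : ℕ} (hbA : b ∈ A) (hbD : b ∉ s.D)
    (L : ℕ) : ∃ t, s ≤ t ∧ ∃ n, L ≤ n ∧ n ≤ t.M ∧ reps (A \ ↑t.D) n = {b} := by
  obtain ⟨K, hK⟩ := exists_forall_le_mul_log (sub_pos.2 h.lt₁₂) (s.M + 2)
  obtain ⟨a, ha, haL⟩ :=
    (h.infinite.sdiff s.D.finite_toSet).exists_gt (L + 2 * (s.M + 1) + 2 * b + 2 * K)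
  obtain ⟨t, hst, hnt, hiso⟩ := h.exists_isolating_extension_at s (n := b + a) (by omega)
    (by omega) (fun m hm => hK m (by omega)) ⟨hbA, hbD⟩ (by rwa [Nat.add_sub_cancel_left])
  exact ⟨t, hst, b + a, by omega, hnt, hiso⟩

theorem exists_extension (s : Stage A c c₁ N₁) (b L : ℕ) :
    ∃ t, s ≤ t ∧ L ≤ t.M ∧
      (b ∈ A → b ∉ s.D → ∃ n, L ≤ n ∧ n ≤ t.M ∧ reps (A \ ↑t.D) n = {b}) := by
  by_cases hb : b ∈ A ∧ b ∉ s.D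
  · obtain ⟨t, hst, n, hLn, hnM, hn⟩ := h.exists_isolating_extension s hb.1 hb.2 L
    exact ⟨t, hst, hLn.trans hnM, fun _ _ => ⟨n, hLn, hnM, hn⟩⟩
  · obtain ⟨x, hx⟩ := s.reps_nonempty N₁ le_rfl s.le_M
    obtain ⟨hxA, hxD⟩ := (mem_reps.1 hx).2.1
    obtain ⟨t, hst, n, hLn, hnM, -⟩ := h.exists_isolating_extension s hxA hxD L
    exact ⟨t, hst, hLn.trans hnM, fun hbA hbD => absurd ⟨hbA, hbD⟩ hb⟩

/-- Step `k` of the chain isolates a representation for `b = (unpair k).1`, so every `b` that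
survives is treated for infinitely many `k`. -/
theorem exists_minimal_basis : ∃ B ⊆ A, IsMinimalAsymptoticBasisOfOrder B 2 := by
  choose next hnext using h.exists_extension
  let stage : ℕ → Stage A c c₁ N₁ := fun k =>
    Nat.rec h.initialStage (fun k s => next s k.unpair.1 k) k
  have hmono : Monotone stage := monotone_nat_of_le_succ fun k => (hnext _ _ _).1
  set B := {x | x ∈ A ∧ ∀ k, x ∉ (stage k).D}
  have hbasis : IsAsymptoticBasisOfOrder B 2 := by
    refine isAsymptoticBasisOfOrder_two_of_reps_nonempty (eventually_atTop.2 ⟨N₁, fun m hm => ?_⟩)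
    have hM : m ≤ (stage (m + 1)).M := (hnext (stage m) m.unpair.1 m).2.1
    rw [reps_setOf_forall_not_mem_eq hmono (k := m + 1) hM]
    exact (stage (m + 1)).reps_nonempty m hm hM
  refine ⟨B, fun x hx => hx.1, isMinimalAsymptoticBasisOfOrder_two hbasis fun b hb => ?_⟩
  refine frequently_atTop.2 fun N => ?_
  set k := Nat.pair b N
  have hk : k.unpair.1 = b := by rw [Nat.unpair_pair]
  obtain ⟨n, hkn, hnM, hn⟩ :=
    (hnext (stage k) k.unpair.1 k).2.2 (hk ▸ hb.1) (hk ▸ hb.2 k)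
  refine ⟨n, (Nat.right_le_pair b N).trans hkn, ?_⟩
  rw [reps_setOf_forall_not_mem_eq hmono (k := k + 1) hnM]
  exact hn.trans (by rw [hk])

end Setup

end Construction

/-- `(3/4) ^ (c₂ log m) = m ^ (-c₂ log (4/3))` is summable exactly when `c₂ log (4/3) > 1`. -/
theorem exists_forall_sum_rpow_lt_one {c₂ : ℝ} (hc₂ : 1 / log (4 / 3) < c₂) :
    ∃ N : ℕ, ∀ W : Finset ℕ, (∀ m ∈ W, N ≤ m) → ∑ m ∈ W, (3 / 4 : ℝ) ^ (c₂ * log m) < 1 := by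
  have hlog : log (3 / 4) = -log (4 / 3) := by
    rw [show (3 / 4 : ℝ) = (4 / 3)⁻¹ by norm_num, log_inv]
  have hexp : c₂ * log (3 / 4) < -1 := by
    rw [hlog, mul_neg, neg_lt_neg_iff, ← div_lt_iff₀ (log_pos (by norm_num))]
    exact hc₂
  obtain ⟨s, hs⟩ := (summable_nat_rpow.2 hexp).vanishing (Iio_mem_nhds one_pos)
  refine ⟨s.sup id + 1, fun W hW => ?_⟩
  have hdisj : Disjoint W s := disjoint_left.2 fun m hmW hms => by
    have := le_sup (f := id) hms
    have := hW m hmW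
    simp only [id] at *
    omega
  calc ∑ m ∈ W, (3 / 4 : ℝ) ^ (c₂ * log m) = ∑ m ∈ W, (m : ℝ) ^ (c₂ * log (3 / 4)) := by
        refine sum_congr rfl fun m hm => ?_
        have hm : (0 : ℝ) < m := by have := hW m hm; exact_mod_cast (by omega : 0 < m)
        rw [rpow_def_of_pos (by norm_num), rpow_def_of_pos hm]
        ring_nf
    _ < 1 := hs W hdisj

end ErdosNathanson

theorem erdos_nathanson_contains_minimal_basis (A : Set ℕ) (f : ℕ → ℕ)
    (hf : ∀ n : ℕ, f n =
      Nat.card {p : ℕ × ℕ // p.1 ∈ A ∧ p.2 ∈ A ∧ p.1 ≤ p.2 ∧ p.1 + p.2 = n})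
    (c : ℝ) (hc : 1 / Real.log (4 / 3) < c)
    (hlarge : ∀ᶠ n : ℕ in atTop, c * Real.log (n : ℝ) < (f n : ℝ)) :
    ∃ B ⊆ A, IsMinimalAsymptoticBasisOfOrder B 2 := by
  obtain ⟨c₂, hc₂, hc₂c⟩ := exists_between hc
  obtain ⟨c₁, hc₂₁, hc₁c⟩ := exists_between hc₂c
  obtain ⟨N₀, hN₀⟩ := eventually_atTop.1 hlarge
  obtain ⟨N, hN⟩ := ErdosNathanson.exists_forall_sum_rpow_lt_one hc₂
  refine ErdosNathanson.Setup.exists_minimal_basis (c₁ := c₁) (c₂ := c₂) (N₁ := max (max N₀ N) 1)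
    { one_le := le_max_right _ _
      nonneg := (div_pos one_pos (Real.log_pos (by norm_num))).le.trans hc₂.le
      lt₁₂ := hc₂₁
      lt₁ := hc₁c
      lt_card_reps := fun m hm => ?_
      sum_lt_one := fun W hW => hN W fun m hmW => ?_ }
  · rw [← ErdosNathanson.natCard_eq_card_reps, ← hf]
    exact hN₀ m (by omega)
  · have := hW m hmW
    omega
end

section
/- (Erdős–Nathanson) There exists a partition of the nonnegative integers into disjoint sets A and B such that A is a minimal asymptotic basis of order 2 and B is a maximal asymptotic nonbasis of order 2. -/
open Pointwise Filter

/-!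
Cut `ℕ` into blocks `(c k, c (k+1)]`, where `c = pivot` is given by `c 0 = 1` and
`c (k+1) = 2 c k + k % 2`, and build `A` block by block. Inside block `k`, membership of `y` is
tied to that of its mirror image `j = c (k+1) - y`: on the upper half `y ∈ A ↔ j ∉ A`, so each
splitting `c (k+1) = j + y` with `j ≤ c k` has one summand in `A` and one in `B = Aᶜ`. In even
blocks the lower half lies in `A`, hence `c (k+1) ∉ B + B`, while adjoining any `b ∈ A` to `B`
gives `c (k+1) = b + (c (k+1) - b)`. In odd blocks the lower half lies in `B` and the mirror rule
has a single exception `e ∈ A`, so `e + (c (k+1) - e)` is the only representation of `c (k+1)` in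
`A + A`; every element of `A` is the exception of infinitely many blocks, so none can be removed
from `A`. A case analysis on the position of `n` in its block puts every other large `n` in both
`A + A` and `B + B`.
-/

theorem exists_fin_two_iff_mem_add (S : Set ℕ) (n : ℕ) :
    (∃ c : Fin 2 → ℕ, (∀ i, c i ∈ S) ∧ ∑ i, c i = n) ↔ n ∈ S + S := by
  constructor
  · rintro ⟨c, hc, rfl⟩
    simpa [Fin.sum_univ_two] using Set.add_mem_add (hc 0) (hc 1)
  · rintro ⟨x, hx, y, hy, rfl⟩
    exact ⟨![x, y], fun i => by fin_cases i <;> assumption, by simp [Fin.sum_univ_two]⟩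

theorem isAsymptoticBasisOfOrder_two_iff (S : Set ℕ) :
    IsAsymptoticBasisOfOrder S 2 ↔ ∀ᶠ n in atTop, n ∈ S + S := by
  simp only [IsAsymptoticBasisOfOrder, exists_fin_two_iff_mem_add]

theorem isMinimalAsymptoticBasisOfOrder_of_frequently {S : Set ℕ} {h : ℕ}
    (hS : IsAsymptoticBasisOfOrder S h)
    (hess : ∀ a ∈ S, ∃ᶠ n in atTop,
      ∀ c : Fin h → ℕ, (∀ i, c i ∈ S) → ∑ i, c i = n → ∃ i, c i = a) :
    IsMinimalAsymptoticBasisOfOrder S h := by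
  refine ⟨hS, fun D hDS hD => ?_⟩
  obtain ⟨a, haS, haD⟩ := Set.exists_of_ssubset hDS
  obtain ⟨n, hn, c, hcD, hsum⟩ := ((hess a haS).and_eventually hD).exists
  obtain ⟨i, rfl⟩ := hn c (fun i => hDS.subset (hcD i)) hsum
  exact haD (hcD i)

namespace ErdosNathanson

def pivot : ℕ → ℕ
  | 0 => 1
  | k + 1 => 2 * pivot k + k % 2

theorem pivot_succ (k : ℕ) : pivot (k + 1) = 2 * pivot k + k % 2 := rfl

theorem pivot_pos (k : ℕ) : 0 < pivot k := by
  induction k with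
  | zero => decide
  | succ k ih => rw [pivot_succ]; omega

theorem pivot_succ_of_even {k : ℕ} (hk : k % 2 = 0) : pivot (k + 1) = 2 * pivot k := by
  rw [pivot_succ, hk, add_zero]

theorem pivot_succ_of_odd {k : ℕ} (hk : k % 2 = 1) : pivot (k + 1) = 2 * pivot k + 1 := by
  rw [pivot_succ, hk]

theorem pivot_lt_pivot_succ (k : ℕ) : pivot k < pivot (k + 1) := by
  have := pivot_pos k
  rw [pivot_succ]
  omega

theorem pivot_strictMono : StrictMono pivot := strictMono_nat_of_lt_succ pivot_lt_pivot_succ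

theorem lt_pivot (k : ℕ) : k < pivot k := by
  induction k with
  | zero => decide
  | succ k ih => have := pivot_lt_pivot_succ k; omega

theorem five_le_pivot {k : ℕ} (hk : 2 ≤ k) : 5 ≤ pivot k := pivot_strictMono.monotone hk

theorem exists_block {K n : ℕ} (hn : pivot K < n) :
    ∃ k, K ≤ k ∧ pivot k < n ∧ n ≤ pivot (k + 1) := by
  by_contra! h
  have hlt : ∀ i, pivot (K + i) < n := by
    intro i
    induction i with
    | zero => exact hn
    | succ i ih => exact h (K + i) (by omega) ih
  have := lt_pivot (K + n)
  have := hlt n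
  omega

/-- The clipping keeps the schedule inside the part of `A` built before block `k`; `Nat.unpair`
makes every value the schedule of infinitely many odd blocks. -/
def schedule (k : ℕ) : ℕ := min (Nat.unpair (k / 2)).2 (pivot (k - 1))

open Classical in
noncomputable def exception (k : ℕ) (S : Set ℕ) : ℕ :=
  if schedule k ∈ S then schedule k else pivot (k - 1)

def blockRule (k : ℕ) (S : Set ℕ) : Set ℕ :=
  {m | if k % 2 = 0 then 2 * (pivot (k + 1) - m) < pivot k → pivot (k + 1) - m ∉ S
    else pivot (k + 1) - m = exception k S ∨
      2 * (pivot (k + 1) - m) ≤ pivot k ∧ pivot (k + 1) - m ∉ S}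

def stage : ℕ → Set ℕ
  | 0 => {1}
  | k + 1 => stage k ∩ Set.Iic (pivot k) ∪ blockRule k (stage k) ∩ Set.Ioi (pivot k)

def A : Set ℕ := ⋃ k, stage k ∩ Set.Iic (pivot k)

theorem mem_stage_iff_of_le {k l m : ℕ} (hkl : k ≤ l) (hm : m ≤ pivot k) :
    m ∈ stage l ↔ m ∈ stage k := by
  induction l, hkl using Nat.le_induction with
  | base => rfl
  | succ l hkl ih =>
    have hml : m ≤ pivot l := hm.trans (pivot_strictMono.monotone hkl)
    simp [stage, hml, not_lt.2 hml, ih]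

theorem mem_A_iff_mem_stage {k m : ℕ} (hm : m ≤ pivot k) : m ∈ A ↔ m ∈ stage k := by
  simp only [A, Set.mem_iUnion, Set.mem_inter_iff, Set.mem_Iic]
  refine ⟨fun ⟨i, hi, hmi⟩ => ?_, fun h => ⟨k, h, hm⟩⟩
  rwa [← mem_stage_iff_of_le (le_max_right i k) hm, mem_stage_iff_of_le (le_max_left i k) hmi]

theorem schedule_le (k : ℕ) : schedule k ≤ pivot (k - 1) := min_le_right _ _

theorem two_mul_exception_le {k : ℕ} (hk : k % 2 = 1) (S : Set ℕ) :
    2 * exception k S ≤ pivot k := by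
  have hc : pivot k = 2 * pivot (k - 1) := by
    have := pivot_succ (k - 1)
    rw [Nat.sub_add_cancel (by omega)] at this
    omega
  have : exception k S ≤ pivot (k - 1) := by
    unfold exception
    split_ifs
    exacts [schedule_le k, le_rfl]
  omega

open Classical in
theorem mem_blockRule_congr {k m : ℕ} {S T : Set ℕ} (hST : ∀ j ≤ pivot k, j ∈ S ↔ j ∈ T)
    (hm : pivot k < m) : m ∈ blockRule k S ↔ m ∈ blockRule k T := by
  have hsched : schedule k ≤ pivot k :=
    (schedule_le k).trans (pivot_strictMono.monotone (Nat.sub_le k 1))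
  have hexc : exception k S = exception k T := if_congr (hST _ hsched) rfl rfl
  have hj : pivot (k + 1) - m ≤ pivot k := by have := pivot_succ k; omega
  simp only [blockRule, Set.mem_ofPred_eq, hexc, hST _ hj]

theorem mem_A_iff_mem_blockRule {k m : ℕ} (h1 : pivot k < m) (h2 : m ≤ pivot (k + 1)) :
    m ∈ A ↔ m ∈ blockRule k A := by
  rw [mem_A_iff_mem_stage h2,
    ← mem_blockRule_congr (fun j hj => (mem_A_iff_mem_stage hj).symm) h1]
  simp [stage, h1, not_le.2 h1]

theorem zero_notMem_A : 0 ∉ A := by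
  simp [mem_A_iff_mem_stage (pivot_pos 0).le, stage]

theorem one_mem_A : 1 ∈ A := by
  simp [mem_A_iff_mem_stage (m := 1) (k := 0) le_rfl, stage]

theorem pivot_mem_A (k : ℕ) : pivot k ∈ A := by
  cases k with
  | zero => exact one_mem_A
  | succ k =>
    rw [mem_A_iff_mem_blockRule (pivot_lt_pivot_succ k) le_rfl]
    simp [blockRule, zero_notMem_A]

theorem two_mem_A : 2 ∈ A := pivot_mem_A 1

theorem exception_mem_A (k : ℕ) : exception k A ∈ A := by
  unfold exception
  split_ifs with h
  exacts [h, pivot_mem_A _]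

theorem mem_A_of_even_lowerHalf {k y : ℕ} (hk : k % 2 = 0) (h1 : pivot k < y)
    (h2 : 2 * y ≤ 3 * pivot k) : y ∈ A := by
  have := pivot_succ_of_even hk
  rw [mem_A_iff_mem_blockRule h1 (by omega)]
  simp only [blockRule, hk, Set.mem_ofPred_eq, if_true]
  intro h
  omega

theorem notMem_A_of_odd_lowerHalf {k y : ℕ} (hk : k % 2 = 1) (h1 : pivot k < y)
    (h2 : 2 * y ≤ 3 * pivot k + 1) : y ∉ A := by
  have := pivot_succ_of_odd hk
  have := two_mul_exception_le hk A
  rw [mem_A_iff_mem_blockRule h1 (by omega)]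
  simp only [blockRule, hk, Set.mem_ofPred_eq, one_ne_zero, if_false]
  rintro (h | ⟨h, -⟩) <;> omega

theorem pivot_succ_sub_mem_A_iff_of_even {k j : ℕ} (hk : k % 2 = 0) (hj : 2 * j < pivot k) :
    pivot (k + 1) - j ∈ A ↔ j ∉ A := by
  have := pivot_succ_of_even hk
  rw [mem_A_iff_mem_blockRule (k := k) (by omega) (by omega)]
  simp only [blockRule, hk, Set.mem_ofPred_eq, if_true,
    Nat.sub_sub_self (by omega : j ≤ pivot (k + 1))]
  exact ⟨fun h => h hj, fun h _ => h⟩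

theorem pivot_succ_sub_notMem_A_of_even {k j : ℕ} (hk : k % 2 = 0) (hj : 2 * j < pivot k)
    (hjA : j ∈ A) : pivot (k + 1) - j ∉ A :=
  fun h => (pivot_succ_sub_mem_A_iff_of_even hk hj).1 h hjA

theorem pivot_succ_sub_mem_A_iff_of_odd {k j : ℕ} (hk : k % 2 = 1) (hj : 2 * j ≤ pivot k)
    (hje : j ≠ exception k A) : pivot (k + 1) - j ∈ A ↔ j ∉ A := by
  have := pivot_succ_of_odd hk
  rw [mem_A_iff_mem_blockRule (k := k) (by omega) (by omega)]
  simp [blockRule, hk, Nat.sub_sub_self (by omega : j ≤ pivot (k + 1)), hje, hj]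

theorem pivot_succ_sub_mem_A_of_odd {k j : ℕ} (hk : k % 2 = 1) (hj : 2 * j ≤ pivot k)
    (hjA : j ∉ A) : pivot (k + 1) - j ∈ A :=
  (pivot_succ_sub_mem_A_iff_of_odd hk hj fun h => hjA (h ▸ exception_mem_A k)).2 hjA

theorem pivot_succ_sub_exception_mem_A {k : ℕ} (hk : k % 2 = 1) :
    pivot (k + 1) - exception k A ∈ A := by
  have := pivot_succ_of_odd hk
  have := two_mul_exception_le hk A
  rw [mem_A_iff_mem_blockRule (k := k) (by omega) (by omega)]
  simp [blockRule, hk, Nat.sub_sub_self (by omega : exception k A ≤ pivot (k + 1))]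

theorem three_notMem_A : 3 ∉ A := notMem_A_of_odd_lowerHalf (k := 1) rfl (by decide) (by decide)

theorem exists_notMem_A_near_pivot {k : ℕ} (hk : 3 ≤ k) :
    ∃ x ∉ A, pivot k ≤ x + 2 ∧ x < pivot k := by
  obtain ⟨k, rfl⟩ : ∃ i, k = i + 1 := ⟨k - 1, by omega⟩
  have := five_le_pivot (k := k) (by omega)
  have := pivot_succ k
  rcases Nat.mod_two_eq_zero_or_one k with hk0 | hk1
  · exact ⟨_, pivot_succ_sub_notMem_A_of_even hk0 (by omega) one_mem_A, by omega, by omega⟩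
  by_cases h1 : 1 = exception k A
  · refine ⟨pivot (k + 1) - 2, ?_, by omega, by omega⟩
    rw [pivot_succ_sub_mem_A_iff_of_odd hk1 (by omega) (by omega), not_not]
    exact two_mem_A
  · refine ⟨pivot (k + 1) - 1, ?_, by omega, by omega⟩
    rw [pivot_succ_sub_mem_A_iff_of_odd hk1 (by omega) h1, not_not]
    exact one_mem_A

theorem eq_exception_of_add_eq_pivot_succ {k x y : ℕ} (hk : k % 2 = 1) (hx : x ∈ A)
    (hy : y ∈ A) (hxy : x + y = pivot (k + 1)) : x = exception k A ∨ y = exception k A := by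
  have hc := pivot_succ_of_odd hk
  wlog hxk : x ≤ pivot k generalizing x y
  · exact (this hy hx (by omega) (by omega)).symm
  by_contra! hne
  rcases le_or_gt (2 * x) (pivot k) with hmir | hlow
  · exact (pivot_succ_sub_mem_A_iff_of_odd hk hmir hne.1).1
      (by rwa [show pivot (k + 1) - x = y by omega]) hx
  · exact notMem_A_of_odd_lowerHalf hk (by omega) (by omega) hy

theorem pivot_succ_notMem_compl_add_compl {k : ℕ} (hk : k % 2 = 0) :
    pivot (k + 1) ∉ Aᶜ + Aᶜ := by
  intro h
  obtain ⟨x, hx, y, hy, hxy⟩ := Set.mem_add.1 h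
  have hc := pivot_succ_of_even hk
  wlog hxk : x ≤ pivot k generalizing x y
  · exact this y hy x hx (by omega) (by omega)
  rcases hxk.lt_or_eq with hlt | rfl
  · rcases lt_or_ge (2 * x) (pivot k) with hmir | hlow
    · exact hy (by rw [show y = pivot (k + 1) - x by omega,
        pivot_succ_sub_mem_A_iff_of_even hk hmir]; exact hx)
    · exact hy (mem_A_of_even_lowerHalf hk (by omega) (by omega))
  · exact hy (by rw [show y = pivot k by omega]; exact pivot_mem_A k)

theorem pivot_succ_mem_A_add_A {k : ℕ} (hk : k % 2 = 1) : pivot (k + 1) ∈ A + A := by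
  have := pivot_succ_of_odd hk
  have := two_mul_exception_le hk A
  exact Set.mem_add.2 ⟨_, exception_mem_A k, _, pivot_succ_sub_exception_mem_A hk, by omega⟩

theorem mem_A_add_A_of_mirror {k n x r : ℕ} (hk : k % 2 = 1) (hx : x ∈ A) (hxr : x + r ∉ A)
    (h : 2 * (x + r) ≤ pivot k) (hn : n + r = pivot (k + 1)) : n ∈ A + A := by
  have := pivot_succ_of_odd hk
  exact Set.mem_add.2 ⟨x, hx, _, pivot_succ_sub_mem_A_of_odd hk h hxr, by omega⟩

theorem mem_compl_add_compl_of_mirror {k n x r : ℕ} (hk : k % 2 = 0) (hx : x ∉ A)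
    (hxr : x + r ∈ A) (h : 2 * (x + r) < pivot k) (hn : n + r = pivot (k + 1)) :
    n ∈ Aᶜ + Aᶜ := by
  have := pivot_succ_of_even hk
  exact Set.mem_add.2 ⟨x, hx, _, pivot_succ_sub_notMem_A_of_even hk h hxr, by omega⟩

theorem exists_mem_A_add_notMem_A {i r : ℕ} (hi : i % 2 = 0) (hi2 : 2 ≤ i) (hr1 : 1 ≤ r)
    (hr : r ≤ pivot (i + 1) + 1) : ∃ x ∈ A, x + r ∉ A ∧ x + r ≤ pivot (i + 2) := by
  have := five_le_pivot hi2
  have h1 : pivot (i + 1) = 2 * pivot i := pivot_succ_of_even hi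
  have h2 : pivot (i + 2) = 2 * pivot (i + 1) + 1 := pivot_succ_of_odd (by omega)
  have hodd : (i + 1) % 2 = 1 := by omega
  -- In each case `x + r` lies in the lower half of the odd block `i + 1`.
  rcases le_or_gt r (pivot i) with hr' | hr'
  · exact ⟨pivot (i + 1), pivot_mem_A _,
      notMem_A_of_odd_lowerHalf hodd (by omega) (by omega), by omega⟩
  rcases lt_or_ge r (2 * pivot i) with hr'' | hr''
  · exact ⟨pivot i + 1, mem_A_of_even_lowerHalf hi (by omega) (by omega),
      notMem_A_of_odd_lowerHalf hodd (by omega) (by omega), by omega⟩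
  · exact ⟨1, one_mem_A, notMem_A_of_odd_lowerHalf hodd (by omega) (by omega), by omega⟩

theorem exists_notMem_A_add_mem_A {i r : ℕ} (hi : i % 2 = 1) (hi3 : 3 ≤ i) (hr1 : 1 ≤ r)
    (hr : r ≤ pivot (i + 1) + 2) : ∃ x ∉ A, x + r ∈ A ∧ x + r ≤ pivot (i + 2) := by
  have := five_le_pivot (k := i) (by omega)
  have h1 : pivot (i + 1) = 2 * pivot i + 1 := pivot_succ_of_odd hi
  have h2 : pivot (i + 2) = 2 * pivot (i + 1) := pivot_succ_of_even (by omega)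
  have hev : (i + 1) % 2 = 0 := by omega
  -- Apart from `x = 0`, `x + r` is the pivot of the even block `i + 1` or lies in its lower half.
  by_cases hrA : r ∈ A
  · exact ⟨0, zero_notMem_A, by rwa [zero_add], by omega⟩
  have hr2 : 2 ≤ r := by
    by_contra
    exact hrA (by rw [show r = 1 by omega]; exact one_mem_A)
  rcases le_or_gt r (pivot i + 1) with hr' | hr'
  · obtain ⟨x, hx, hx1, hx2⟩ := exists_notMem_A_near_pivot (k := i + 1) (by omega)
    refine ⟨x, hx, ?_, by omega⟩
    rcases (show pivot (i + 1) ≤ x + r by omega).eq_or_lt with heq | hlt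
    · exact heq ▸ pivot_mem_A _
    · exact mem_A_of_even_lowerHalf hev hlt (by omega)
  rcases le_or_gt r (2 * pivot i) with hr'' | hr''
  · exact ⟨pivot i + 1, notMem_A_of_odd_lowerHalf hi (by omega) (by omega),
      mem_A_of_even_lowerHalf hev (by omega) (by omega), by omega⟩
  · exact ⟨3, three_notMem_A, mem_A_of_even_lowerHalf hev (by omega) (by omega), by omega⟩

theorem mem_A_add_A_of_even {k n : ℕ} (hk : k % 2 = 0) (hk2 : 2 ≤ k) (h1 : pivot k < n)
    (h2 : n ≤ pivot (k + 1)) : n ∈ A + A := by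
  obtain ⟨i, rfl⟩ : ∃ i, k = i + 1 := ⟨k - 1, by omega⟩
  have := pivot_succ_of_odd (k := i) (by omega)
  have := pivot_succ_of_even hk
  rcases (show pivot (i + 1) + 1 ≤ n by omega).eq_or_lt with hn | hn
  · exact Set.mem_add.2 ⟨1, one_mem_A, pivot (i + 1), pivot_mem_A _, by omega⟩
  rcases le_or_gt n (3 * pivot i + 2) with hn' | hn'
  · exact Set.mem_add.2 ⟨1, one_mem_A, n - 1,
      mem_A_of_even_lowerHalf hk (by omega) (by omega), by omega⟩
  rcases lt_or_ge n (2 * pivot (i + 1)) with hn'' | hn''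
  · exact Set.mem_add.2 ⟨pivot i, pivot_mem_A i, n - pivot i,
      mem_A_of_even_lowerHalf hk (by omega) (by omega), by omega⟩
  · exact Set.mem_add.2 ⟨pivot (i + 1), pivot_mem_A _, pivot (i + 1), pivot_mem_A _, by omega⟩

theorem mem_A_add_A_of_odd {k n : ℕ} (hk : k % 2 = 1) (hk5 : 5 ≤ k) (h1 : pivot k < n)
    (h2 : n ≤ pivot (k + 1)) : n ∈ A + A := by
  obtain ⟨i, rfl⟩ : ∃ i, k = i + 3 := ⟨k - 3, by omega⟩
  have hev : (i + 2) % 2 = 0 := by omega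
  have : pivot (i + 2) = 2 * pivot (i + 1) + 1 := pivot_succ_of_odd (by omega)
  have : pivot (i + 3) = 2 * pivot (i + 2) := pivot_succ_of_even hev
  have := pivot_succ_of_odd hk
  rcases (show pivot (i + 3) + 1 ≤ n by omega).eq_or_lt with hn | hn
  · exact Set.mem_add.2 ⟨1, one_mem_A, pivot (i + 3), pivot_mem_A _, by omega⟩
  rcases lt_or_ge n (3 * pivot (i + 2)) with hsolid | hsolid
  · exact Set.mem_add.2 ⟨n / 2, mem_A_of_even_lowerHalf hev (by omega) (by omega),
      n - n / 2, mem_A_of_even_lowerHalf hev (by omega) (by omega), by omega⟩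
  rcases hsolid.eq_or_lt with hn' | hn'
  · exact Set.mem_add.2 ⟨pivot (i + 2), pivot_mem_A _, pivot (i + 3), pivot_mem_A _, by omega⟩
  rcases le_or_gt (2 * n) (2 * pivot (i + 3) + 3 * pivot (i + 2)) with hlow | hmir
  · exact Set.mem_add.2 ⟨pivot (i + 3), pivot_mem_A _, n - pivot (i + 3),
      mem_A_of_even_lowerHalf hev (by omega) (by omega), by omega⟩
  rcases h2.eq_or_lt with rfl | hlt
  · exact pivot_succ_mem_A_add_A hk
  obtain ⟨x, hx, hxr, hxr'⟩ := exists_mem_A_add_notMem_A (i := i)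
    (r := 2 * pivot (i + 3) + 1 - n) (by omega) (by omega) (by omega) (by omega)
  exact mem_A_add_A_of_mirror hk hx hxr (by omega) (by omega)

theorem mem_compl_add_compl_of_odd {k n : ℕ} (hk : k % 2 = 1) (hk5 : 5 ≤ k) (h1 : pivot k < n)
    (h2 : n ≤ pivot (k + 1)) : n ∈ Aᶜ + Aᶜ := by
  obtain ⟨i, rfl⟩ : ∃ i, k = i + 2 := ⟨k - 2, by omega⟩
  have hev : (i + 1) % 2 = 0 := by omega
  have := five_le_pivot (k := i + 1) (by omega)
  have : pivot (i + 2) = 2 * pivot (i + 1) := pivot_succ_of_even hev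
  have := pivot_succ_of_odd hk
  rcases le_or_gt n (3 * pivot (i + 1)) with hsolid | hsolid
  · exact Set.mem_add.2 ⟨0, zero_notMem_A, n,
      notMem_A_of_odd_lowerHalf hk h1 (by omega), by omega⟩
  rcases le_or_gt n (4 * pivot (i + 1) - 2) with hnear | hnear
  · obtain ⟨x, hx, hx1, hx2⟩ := exists_notMem_A_near_pivot (k := i + 1) (by omega)
    exact Set.mem_add.2 ⟨x, hx, n - x,
      notMem_A_of_odd_lowerHalf hk (by omega) (by omega), by omega⟩
  rcases (show 4 * pivot (i + 1) - 1 ≤ n by omega).eq_or_lt with hn | hn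
  · exact Set.mem_add.2 ⟨pivot (i + 2) - 2,
      pivot_succ_sub_notMem_A_of_even hev (by omega) two_mem_A, pivot (i + 2) + 1,
      notMem_A_of_odd_lowerHalf hk (by omega) (by omega), by omega⟩
  · exact Set.mem_add.2 ⟨pivot (i + 2) - 1,
      pivot_succ_sub_notMem_A_of_even hev (by omega) one_mem_A, n - (pivot (i + 2) - 1),
      notMem_A_of_odd_lowerHalf hk (by omega) (by omega), by omega⟩

theorem mem_compl_add_compl_of_even {k n : ℕ} (hk : k % 2 = 0) (hk6 : 6 ≤ k) (h1 : pivot k < n)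
    (h2 : n < pivot (k + 1)) : n ∈ Aᶜ + Aᶜ := by
  obtain ⟨i, rfl⟩ : ∃ i, k = i + 3 := ⟨k - 3, by omega⟩
  have hodd : (i + 2) % 2 = 1 := by omega
  have : pivot (i + 2) = 2 * pivot (i + 1) := pivot_succ_of_even (by omega)
  have : pivot (i + 3) = 2 * pivot (i + 2) + 1 := pivot_succ_of_odd hodd
  have := pivot_succ_of_even hk
  rcases le_or_gt n (3 * pivot (i + 2)) with hsolid | hsolid
  · exact Set.mem_add.2 ⟨n / 2, notMem_A_of_odd_lowerHalf hodd (by omega) (by omega),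
      n - n / 2, notMem_A_of_odd_lowerHalf hodd (by omega) (by omega), by omega⟩
  rcases lt_or_ge n (7 * pivot (i + 1)) with hnear | hmir
  · obtain ⟨x, hx, hx1, hx2⟩ := exists_notMem_A_near_pivot (k := i + 3) (by omega)
    exact Set.mem_add.2 ⟨x, hx, n - x,
      notMem_A_of_odd_lowerHalf hodd (by omega) (by omega), by omega⟩
  obtain ⟨x, hx, hxr, hxr'⟩ := exists_notMem_A_add_mem_A (i := i)
    (r := 2 * pivot (i + 3) - n) (by omega) (by omega) (by omega) (by omega)
  exact mem_compl_add_compl_of_mirror hk hx hxr (by omega) (by omega)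

theorem eventually_mem_A_add_A : ∀ᶠ n in atTop, n ∈ A + A := by
  refine eventually_atTop.2 ⟨pivot 6 + 1, fun n hn => ?_⟩
  obtain ⟨k, hk6, h1, h2⟩ := exists_block (K := 6) (n := n) (by omega)
  rcases Nat.mod_two_eq_zero_or_one k with hk | hk
  · exact mem_A_add_A_of_even hk (by omega) h1 h2
  · exact mem_A_add_A_of_odd hk (by omega) h1 h2

theorem mem_compl_add_compl {n : ℕ} (hn : pivot 6 < n)
    (hne : ∀ k, k % 2 = 0 → n ≠ pivot (k + 1)) : n ∈ Aᶜ + Aᶜ := by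
  obtain ⟨k, hk6, h1, h2⟩ := exists_block hn
  rcases Nat.mod_two_eq_zero_or_one k with hk | hk
  · exact mem_compl_add_compl_of_even hk hk6 h1 (h2.lt_of_ne (hne k hk))
  · exact mem_compl_add_compl_of_odd hk (by omega) h1 h2

theorem exists_exception_eq {a : ℕ} (ha : a ∈ A) (N : ℕ) :
    ∃ k, N ≤ k ∧ k % 2 = 1 ∧ exception k A = a := by
  refine ⟨2 * Nat.pair N a + 1, by have := Nat.left_le_pair N a; omega, by omega, ?_⟩
  have hsched : schedule (2 * Nat.pair N a + 1) = a := by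
    have := Nat.right_le_pair N a
    have := lt_pivot (2 * Nat.pair N a)
    simp only [schedule, show (2 * Nat.pair N a + 1) / 2 = Nat.pair N a by omega,
      Nat.unpair_pair, Nat.add_sub_cancel]
    exact min_eq_left (by omega)
  simp [exception, hsched, ha]

theorem isMinimalAsymptoticBasisOfOrder_A : IsMinimalAsymptoticBasisOfOrder A 2 := by
  refine isMinimalAsymptoticBasisOfOrder_of_frequently
    ((isAsymptoticBasisOfOrder_two_iff A).2 eventually_mem_A_add_A) fun a ha => ?_
  refine frequently_atTop.2 fun N => ?_
  obtain ⟨k, hkN, hk, rfl⟩ := exists_exception_eq ha N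
  refine ⟨pivot (k + 1), by have := lt_pivot (k + 1); omega, fun c hc hsum => ?_⟩
  rw [Fin.sum_univ_two] at hsum
  rcases eq_exception_of_add_eq_pivot_succ hk (hc 0) (hc 1) hsum with h | h
  exacts [⟨0, h⟩, ⟨1, h⟩]

theorem isMaximalAsymptoticNonbasisOfOrder_compl_A : IsMaximalAsymptoticNonbasisOfOrder Aᶜ 2 := by
  refine ⟨fun h => ?_, fun b hb => ?_⟩
  · obtain ⟨N, hN⟩ := eventually_atTop.1 ((isAsymptoticBasisOfOrder_two_iff _).1 h)
    exact pivot_succ_notMem_compl_add_compl (k := 2 * N) (by omega)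
      (hN _ (by have := lt_pivot (2 * N + 1); omega))
  rw [Set.notMem_compl_iff] at hb
  refine (isAsymptoticBasisOfOrder_two_iff _).2
    (eventually_atTop.2 ⟨pivot 6 + 4 * b + 1, fun n hn => ?_⟩)
  by_cases hc : ∃ k, k % 2 = 0 ∧ n = pivot (k + 1)
  · obtain ⟨k, hk, rfl⟩ := hc
    have := pivot_succ_of_even hk
    exact Set.mem_add.2 ⟨b, Or.inr rfl, _,
      Or.inl (pivot_succ_sub_notMem_A_of_even hk (by omega) hb), by omega⟩
  · exact Set.add_subset_add Set.subset_union_left Set.subset_union_left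
      (mem_compl_add_compl (by omega) fun k hk hn => hc ⟨k, hk, hn⟩)

end ErdosNathanson

theorem erdos_nathanson_partition :
    ∃ A B : Set ℕ, Disjoint A B ∧ A ∪ B = Set.univ ∧
      IsMinimalAsymptoticBasisOfOrder A 2 ∧
      IsMaximalAsymptoticNonbasisOfOrder B 2 :=
  ⟨ErdosNathanson.A, ErdosNathanson.Aᶜ, disjoint_compl_right, Set.union_compl_self _,
    ErdosNathanson.isMinimalAsymptoticBasisOfOrder_A,
    ErdosNathanson.isMaximalAsymptoticNonbasisOfOrder_compl_A⟩
end
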